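/- arXiv:1404.1851 — 8 statements merged into one kernel-verified Lean document; each statement's English description precedes it below -/
import Mathlib

section
/- Let n ≥ 1 and π a permutation of {1,…,n}. An assignment of spins s : {1,…,n} → ℤ with s(i) ∈ {d⁺(π(i), i), d⁺(π(i), i) − n} for each i is a valid disbursement (i.e., moving each pebble p_i by displacement s(i) along the cycle brings it from v_{π(i)} to v_i simultaneously realizable by swaps) if and only if ∑_{i=1}^n s(i) = 0. -/
/-- Clockwise distance from `a` to `b` on the cycle `C_n`, as an integer. -/
def dplus (n : ℕ) (a b : ZMod n) : ℤ := ((b - a).val : ℤ)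

/-- `Realizes n π s` : starting from the configuration where pebble `p` sits at
vertex `π p`, there is a sequence of rounds, each consisting of swapping the
pebbles on a set of pairwise disjoint edges of `C_n`, after which each pebble `p`
has net (signed, clockwise-positive) displacement `s p`.  Here `g t p` is the
cumulative displacement of pebble `p` after `t` rounds, so its position is
`π p + g t p (mod n)`. -/
def Realizes (n : ℕ) (π : Equiv.Perm (ZMod n)) (s : ZMod n → ℤ) : Prop :=
  ∃ (k : ℕ) (g : ℕ → ZMod n → ℤ), g 0 = 0 ∧ g k = s ∧
    ∀ t < k, ∃ M : Finset (ZMod n), (∀ i ∈ M, i + 1 ∉ M) ∧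
      ∀ p : ZMod n,
        g (t + 1) p =
          if (π p + (g t p : ZMod n)) ∈ M then g t p + 1
          else if (π p + (g t p : ZMod n)) - 1 ∈ M then g t p - 1
          else g t p

/-!
Track pebble `p` by its cumulative displacement `g p`, so that it stands at vertex `π p + g p`.
A round of swaps across the disjoint edges `{i, i + 1}`, `i ∈ M`, moves the pebble at vertex `x`
by `swapShift M x`. The map `x ↦ x + swapShift M x` is a permutation and `swapShift M` sums to
zero, so the total displacement never changes, and it starts at `0`.

Conversely, let `ρ x` be the displacement still owed by the pebble at vertex `x`; it sums to zero
and `x ↦ x + ρ x` is injective. If `ρ ≠ 0`, some edge has `ρ (x + 1) + 2 ≤ ρ x`: otherwise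
`ρ x = ρ (x + 1) + 1` is excluded by injectivity, so `ρ` is weakly increasing around the cycle,
hence constant, hence zero. Swapping across that edge strictly decreases `∑ ρ²`, so finitely many
rounds reach `s`.
-/

open Finset Function Relation

theorem Relation.ReflTransGen.exists_nat_chain {α : Type*} {r : α → α → Prop} {a b : α}
    (h : ReflTransGen r a b) :
    ∃ (k : ℕ) (f : ℕ → α), f 0 = a ∧ f k = b ∧ ∀ t < k, r (f t) (f (t + 1)) := by
  induction h using ReflTransGen.head_induction_on with
  | refl => exact ⟨0, fun _ => b, rfl, rfl, by simp⟩
  | @head a c hac _ ih =>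
    obtain ⟨k, f, hf0, hfk, hf⟩ := ih
    refine ⟨k + 1, fun | 0 => a | t + 1 => f t, rfl, hfk, fun t ht => ?_⟩
    cases t with
    | zero => simpa [hf0] using hac
    | succ t => exact hf t (by omega)

theorem Relation.reflTransGen_of_nat_chain {α : Type*} {r : α → α → Prop} {k : ℕ} {f : ℕ → α}
    (hf : ∀ t < k, r (f t) (f (t + 1))) : ReflTransGen r (f 0) (f k) := by
  induction k with
  | zero => exact .refl
  | succ k ih => exact (ih fun t ht => hf t (by omega)).tail (hf k (by omega))

theorem ZMod.apply_eq_of_forall_le_apply_add_one {n : ℕ} [NeZero n] {α : Type*} [PartialOrder α]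
    {f : ZMod n → α} (hf : ∀ x, f x ≤ f (x + 1)) (x y : ZMod n) : f x = f y := by
  have hle : ∀ x y, f x ≤ f y := by
    intro x y
    have hk : ∀ k : ℕ, f x ≤ f (x + k) := by
      intro k
      induction k with
      | zero => simp
      | succ k ih => exact ih.trans (by simpa [add_assoc] using hf (x + k))
    simpa using hk (y - x).val
  exact (hle x y).antisymm (hle y x)

namespace CyclePebble

variable {n : ℕ} {M : Finset (ZMod n)}

def swapShift (M : Finset (ZMod n)) (x : ZMod n) : ℤ :=
  if x ∈ M then 1 else if x - 1 ∈ M then -1 else 0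

theorem ite_eq_add_swapShift (M : Finset (ZMod n)) (x : ZMod n) (c : ℤ) :
    (if x ∈ M then c + 1 else if x - 1 ∈ M then c - 1 else c) = c + swapShift M x := by
  unfold swapShift
  split_ifs <;> ring

theorem swapShift_eq_sub (hM : ∀ i ∈ M, i + 1 ∉ M) (x : ZMod n) :
    swapShift M x = (if x ∈ M then 1 else 0) - (if x - 1 ∈ M then 1 else 0) := by
  have : x ∈ M → x - 1 ∉ M := fun hx hx' => hM _ hx' (by simpa using hx)
  unfold swapShift
  split_ifs <;> simp_all

theorem involutive_add_swapShift (hM : ∀ i ∈ M, i + 1 ∉ M) :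
    Involutive fun x => x + (swapShift M x : ZMod n) := by
  intro x
  by_cases hx : x ∈ M
  · have : x + 1 ∉ M := hM x hx
    simp [swapShift, hx, this]
  · by_cases hx' : x - 1 ∈ M
    · have hx1 : x + (swapShift M x : ZMod n) = x - 1 := by
        simp only [swapShift, if_neg hx, if_pos hx']
        push_cast
        ring
      simp only [hx1]
      simp [swapShift, hx']
    · simp [swapShift, hx, hx']

theorem sum_swapShift [NeZero n] (hM : ∀ i ∈ M, i + 1 ∉ M) : ∑ x, swapShift M x = 0 := by
  simp_rw [swapShift_eq_sub hM, sum_sub_distrib, sub_eq_zero]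
  exact ((Equiv.subRight 1).sum_comp fun x => if x ∈ M then (1 : ℤ) else 0).symm

def position (π : Equiv.Perm (ZMod n)) (g : ZMod n → ℤ) (p : ZMod n) : ZMod n :=
  π p + (g p : ZMod n)

def Round (π : Equiv.Perm (ZMod n)) (g g' : ZMod n → ℤ) : Prop :=
  ∃ M : Finset (ZMod n), (∀ i ∈ M, i + 1 ∉ M) ∧
    ∀ p, g' p = g p + swapShift M (position π g p)

theorem realizes_iff_reflTransGen {π : Equiv.Perm (ZMod n)} {s : ZMod n → ℤ} :
    Realizes n π s ↔ ReflTransGen (Round π) 0 s := by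
  have : Realizes n π s ↔ ∃ (k : ℕ) (g : ℕ → ZMod n → ℤ), g 0 = 0 ∧ g k = s ∧
      ∀ t < k, Round π (g t) (g (t + 1)) := by
    simp only [Realizes, Round, position, ite_eq_add_swapShift]
  rw [this]
  constructor
  · rintro ⟨k, g, hg0, rfl, hg⟩
    exact hg0 ▸ reflTransGen_of_nat_chain hg
  · exact ReflTransGen.exists_nat_chain

variable {π : Equiv.Perm (ZMod n)} {g g' : ZMod n → ℤ}

@[simp]
theorem position_zero : position π 0 = π := by
  ext p
  simp [position]

theorem Round.injective_position (h : Round π g g') (hg : Injective (position π g)) :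
    Injective (position π g') := by
  obtain ⟨M, hM, hg'⟩ := h
  have : position π g' = (fun x => x + (swapShift M x : ZMod n)) ∘ position π g := by
    ext p
    simp only [position, hg', comp_apply, Int.cast_add]
    ring
  rw [this]
  exact (involutive_add_swapShift hM).injective.comp hg

theorem Round.sum_eq [NeZero n] (h : Round π g g') (hg : Injective (position π g)) :
    ∑ p, g' p = ∑ p, g p := by
  obtain ⟨M, hM, hg'⟩ := h
  rw [sum_congr rfl fun p _ => hg' p, sum_add_distrib,
    (Finite.injective_iff_bijective.mp hg).sum_comp (swapShift M), sum_swapShift hM, add_zero]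

theorem injective_position_of_reflTransGen (h : ReflTransGen (Round π) g g')
    (hg : Injective (position π g)) : Injective (position π g') := by
  induction h with
  | refl => exact hg
  | tail _ hround ih => exact hround.injective_position ih

theorem sum_eq_of_reflTransGen [NeZero n] (h : ReflTransGen (Round π) g g')
    (hg : Injective (position π g)) : ∑ p, g' p = ∑ p, g p := by
  induction h with
  | refl => rfl
  | tail hgb hround ih =>
    rw [hround.sum_eq (injective_position_of_reflTransGen hgb hg), ih]

theorem exists_apply_add_one_add_two_le [NeZero n] {ρ : ZMod n → ℤ} (hsum : ∑ x, ρ x = 0)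
    (hinj : Injective fun x => x + (ρ x : ZMod n)) (hρ : ρ ≠ 0) :
    ∃ x, ρ (x + 1) + 2 ≤ ρ x := by
  by_contra! hlt
  have hmono : ∀ x, ρ x ≤ ρ (x + 1) := by
    intro x
    by_contra! hgt
    have hsucc : ρ x = ρ (x + 1) + 1 := by linarith [hlt x]
    have hxx : x = x + 1 := hinj (by simp only [hsucc]; push_cast; ring)
    rw [← hxx] at hsucc
    omega
  have hconst := ZMod.apply_eq_of_forall_le_apply_add_one hmono
  have hzero : ρ 0 = 0 := by
    simpa [hconst _ 0, NeZero.ne n] using hsum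
  exact hρ (funext fun x => (hconst x 0).trans hzero)

theorem exists_sum_sq_sub_swapShift_lt [NeZero n] {ρ : ZMod n → ℤ} (hsum : ∑ x, ρ x = 0)
    (hinj : Injective fun x => x + (ρ x : ZMod n)) (hρ : ρ ≠ 0) :
    ∃ M : Finset (ZMod n), (∀ i ∈ M, i + 1 ∉ M) ∧
      ∑ y, (ρ y - swapShift M y) ^ 2 < ∑ y, ρ y ^ 2 := by
  obtain ⟨x, hx⟩ := exists_apply_add_one_add_two_le hsum hinj hρ
  have hx1 : x + 1 ≠ x := fun h => by rw [h] at hx; omega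
  refine ⟨{x}, by simpa using hx1, ?_⟩
  have hdiff : ∑ y, ((ρ y - swapShift {x} y) ^ 2 - ρ y ^ 2) =
      ((ρ x - 1) ^ 2 - ρ x ^ 2) + ((ρ (x + 1) + 1) ^ 2 - ρ (x + 1) ^ 2) := by
    rw [Fintype.sum_eq_add x (x + 1) hx1.symm]
    · simp [swapShift, hx1]
    · rintro y ⟨hyx, hyx1⟩
      have : y - 1 ≠ x := fun h => hyx1 (by rw [← h]; ring)
      simp [swapShift, hyx, this]
  rw [sum_sub_distrib] at hdiff
  linarith

variable {s : ZMod n → ℤ}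

theorem exists_round_sum_sq_lt [NeZero n] (hs : ∀ p, position π s p = p)
    (hg : Injective (position π g)) (hsum : ∑ p, g p = ∑ p, s p) (hgs : g ≠ s) :
    ∃ g', Round π g g' ∧ ∑ p, (s p - g' p) ^ 2 < ∑ p, (s p - g p) ^ 2 := by
  set e := Equiv.ofBijective _ (Finite.injective_iff_bijective.mp hg)
  have he : ∀ p, e p = π p + (g p : ZMod n) := fun _ => rfl
  set ρ : ZMod n → ℤ := fun x => s (e.symm x) - g (e.symm x)
  have hρe : ∀ p, ρ (e p) = s p - g p := fun p => by simp [ρ]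
  have hρsum : ∑ x, ρ x = 0 := by
    rw [← e.sum_comp]
    simp [hρe, hsum]
  have hρinj : Injective fun x => x + (ρ x : ZMod n) := by
    have hpos : ∀ p, e p + (ρ (e p) : ZMod n) = p := fun p => by
      have hsp : π p + (s p : ZMod n) = p := hs p
      rw [hρe, Int.cast_sub, he]
      linear_combination hsp
    have : (fun x => x + (ρ x : ZMod n)) = e.symm := by
      ext x
      simpa using hpos (e.symm x)
    rw [this]
    exact e.symm.injective
  have hρ : ρ ≠ 0 := fun h => hgs <| funext fun p => by
    have := congrFun h (e p)
    rw [hρe, Pi.zero_apply, sub_eq_zero] at this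
    exact this.symm
  obtain ⟨M, hM, hlt⟩ := exists_sum_sq_sub_swapShift_lt hρsum hρinj hρ
  refine ⟨fun p => g p + swapShift M (e p), ⟨M, hM, fun p => rfl⟩, ?_⟩
  rw [← e.sum_comp fun y => (ρ y - swapShift M y) ^ 2, ← e.sum_comp fun y => ρ y ^ 2] at hlt
  simpa [hρe, sub_sub] using hlt

theorem reflTransGen_round_of_sum_eq [NeZero n] {g : ZMod n → ℤ}
    (hs : ∀ p, position π s p = p) (hg : Injective (position π g)) (hsum : ∑ p, g p = ∑ p, s p) :
    ReflTransGen (Round π) g s := by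
  by_cases hgs : g = s
  · exact hgs ▸ .refl
  obtain ⟨g', hround, hlt⟩ := exists_round_sum_sq_lt hs hg hsum hgs
  exact .head hround <| reflTransGen_round_of_sum_eq hs (hround.injective_position hg)
    ((hround.sum_eq hg).trans hsum)
termination_by (∑ p, (s p - g p) ^ 2).toNat
decreasing_by
  exact (Int.toNat_lt_toNat ((by positivity : (0 : ℤ) ≤ _).trans_lt hlt)).mpr hlt

theorem position_eq_self_of_spin [NeZero n] {p : ZMod n}
    (hs : s p = dplus n (π p) p ∨ s p = dplus n (π p) p - n) :
    position π s p = p := by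
  obtain hs | hs := hs <;> simp [position, hs, dplus]

end CyclePebble

open CyclePebble

/-- An assignment of spins `s i ∈ {d⁺(π(i), i), d⁺(π(i), i) − n}` is a valid
disbursement (realizable by a sequence of swaps bringing every pebble to its
destination) if and only if the spins sum to zero. -/
theorem stmt1 (n : ℕ) [NeZero n] (π : Equiv.Perm (ZMod n)) (s : ZMod n → ℤ)
    (hs : ∀ i, s i = dplus n (π i) i ∨ s i = dplus n (π i) i - n) :
    Realizes n π s ↔ ∑ i, s i = 0 := by
  rw [realizes_iff_reflTransGen]
  constructor
  · intro h
    simpa using sum_eq_of_reflTransGen h (by simpa using π.injective)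
  · intro hsum
    exact reflTransGen_round_of_sum_eq (fun p => position_eq_self_of_spin (hs p))
      (by simpa using π.injective) (by simpa using hsum.symm)
end

section
/- Let s : {1,…,n} → ℤ be a valid disbursement (s(i) ∈ {d⁺(π(i),i), d⁺(π(i),i) − n} for each i and ∑ s(i) = 0) that minimizes ∑_{i} |s(i)| among all valid disbursements of π. Then s(i) − s(j) ≤ n for all i, j. -/
/-- A valid disbursement for `π` on `C_n`: each spin is `d⁺(π(i), i)` or
`d⁺(π(i), i) − n`, and the spins sum to zero. -/
def ValidDisb (n : ℕ) [NeZero n] (π : Equiv.Perm (ZMod n)) (s : ZMod n → ℤ) : Prop :=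
  (∀ i, s i = dplus n (π i) i ∨ s i = dplus n (π i) i - n) ∧ ∑ i, s i = 0

lemma dplus_nonneg (n : ℕ) (a b : ZMod n) : 0 ≤ dplus n a b := Int.ofNat_nonneg _

lemma dplus_lt (n : ℕ) [NeZero n] (a b : ZMod n) : dplus n a b < n := by
  unfold dplus; exact_mod_cast ZMod.val_lt _

lemma split_sum (n : ℕ) [NeZero n] (i j : ZMod n) (hij : i ≠ j) (f : ZMod n → ℤ) :
    ∑ k, f k = f i + f j + ∑ k ∈ (Finset.univ.erase i).erase j, f k := by
  rw [← Finset.add_sum_erase _ f (Finset.mem_univ i),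
    ← Finset.add_sum_erase _ f (Finset.mem_erase.2 ⟨hij.symm, Finset.mem_univ j⟩)]
  ring

/-- If a valid disbursement minimizes `∑ |s i|` among all valid disbursements of `π`,
then `s i − s j ≤ n` for all pebbles `i, j`. -/
theorem stmt2 (n : ℕ) [NeZero n] (π : Equiv.Perm (ZMod n)) (s : ZMod n → ℤ)
    (hv : ValidDisb n π s)
    (hmin : ∀ s' : ZMod n → ℤ, ValidDisb n π s' → ∑ i, |s i| ≤ ∑ i, |s' i|) :
    ∀ i j : ZMod n, s i - s j ≤ n := by
  intro i j
  by_contra h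
  push_neg at h
  have hsi_lt : s i < n := by
    rcases hv.1 i with h1 | h1 <;> rw [h1]
    · exact dplus_lt n _ _
    · have := dplus_lt n (π i) i
      have := dplus_nonneg n (π i) i
      omega
  have hsj_ge : (-n : ℤ) ≤ s j := by
    rcases hv.1 j with h1 | h1 <;> rw [h1]
    · have := dplus_nonneg n (π j) j; omega
    · have := dplus_nonneg n (π j) j; omega
  have hsi_pos : 0 < s i := by omega
  have hsj_neg : s j < 0 := by omega
  have hsi : s i = dplus n (π i) i := by
    rcases hv.1 i with h1 | h1
    · exact h1
    · have := dplus_lt n (π i) i; omega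
  have hsj : s j = dplus n (π j) j - n := by
    rcases hv.1 j with h1 | h1
    · have := dplus_nonneg n (π j) j; omega
    · exact h1
  have hij : i ≠ j := by intro e; rw [e] at hsi_pos; omega
  set s' : ZMod n → ℤ := fun k => if k = i then s i - n else if k = j then s j + n else s k
    with hs'
  have hs'i : s' i = s i - n := by simp [hs']
  have hs'j : s' j = s j + n := by simp [hs', hij.symm]
  have hs'k : ∀ k ∈ (Finset.univ.erase i).erase j, s' k = s k := by
    intro k hk
    rw [Finset.mem_erase, Finset.mem_erase] at hk
    simp [hs', hk.1, hk.2.1]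
  have hvalid : ValidDisb n π s' := by
    constructor
    · intro k
      by_cases hki : k = i
      · subst hki; rw [hs'i, hsi]; right; rfl
      · by_cases hkj : k = j
        · subst hkj; rw [hs'j, hsj]; left; ring
        · have : s' k = s k := by simp [hs', hki, hkj]
          rw [this]; exact hv.1 k
    · have hsum := split_sum n i j hij s
      have hz := hv.2
      have heq2 : ∑ k ∈ (Finset.univ.erase i).erase j, s' k
          = ∑ k ∈ (Finset.univ.erase i).erase j, s k := Finset.sum_congr rfl hs'k
      rw [split_sum n i j hij s', hs'i, hs'j, heq2]
      omega
  have hle := hmin s' hvalid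
  rw [split_sum n i j hij (fun k => |s' k|), split_sum n i j hij (fun k => |s k|)] at hle
  simp only [hs'i, hs'j] at hle
  have heq : ∑ k ∈ (Finset.univ.erase i).erase j, |s' k|
      = ∑ k ∈ (Finset.univ.erase i).erase j, |s k| :=
    Finset.sum_congr rfl fun k hk => by rw [hs'k k hk]
  rw [heq] at hle
  have h1 : |s i| = s i := abs_of_pos hsi_pos
  have h2 : |s j| = -s j := abs_of_neg hsj_neg
  have h3 : |s i - n| = n - s i := by rw [abs_of_nonpos (by omega)]; ring
  have h4 : |s j + n| = s j + n := abs_of_nonneg (by omega)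
  omega
end

section
/- Suppose pebbles p_i and p_j occupy adjacent vertices on C_n (d⁺(p_i,p_j) = 1) with p_i ≻ p_j, all spins satisfy |s(p) − s(q)| ≤ n, and distinct pebbles have distinct destinations (so s(p) − s(q) ≠ d⁺(p,q) for p ≠ q). After swapping p_i and p_j (which exchanges their positions, decreases s(p_i) by 1, and increases s(p_j) by 1), p_i and p_j are incomparable: neither p_i ≻ p_j nor p_j ≻ p_i holds for the new spins and positions. -/
/-- Pebbles `p_i, p_j` at adjacent positions `a, b` on `C_n` (`d⁺(p_i,p_j) = 1`),
with `p_i ≻ p_j` (where `p ≻ q` means `s(p) − s(q) > d⁺(p,q)`), spins satisfying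
`|s(p_i) − s(p_j)| ≤ n`, and distinct destinations (`s(p) − s(q) ≠ d⁺(p,q)`).
After swapping (`p_i` moves to `b` with new spin `si − 1`, `p_j` moves to `a`
with new spin `sj + 1`, and the new clockwise distance from `p_i` to `p_j` is
`d⁺(b,a) = n − 1`), the two pebbles are incomparable. -/
theorem stmt6 (n : ℕ) (hn : 3 ≤ n) (a b : ZMod n) (si sj : ℤ)
    (hadj : (b - a).val = 1)
    (hbig : si - sj > ((b - a).val : ℤ))
    (h1 : si - sj ≤ n) (h2 : sj - si ≤ n)
    (hne1 : si - sj ≠ ((b - a).val : ℤ))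
    (hne2 : sj - si ≠ ((a - b).val : ℤ)) :
    ¬ ((si - 1) - (sj + 1) > ((a - b).val : ℤ)) ∧
    ¬ ((sj + 1) - (si - 1) > ((b - a).val : ℤ)) := by
  haveI : NeZero n := ⟨by omega⟩
  have hba : b - a ≠ 0 := by
    intro h; rw [h] at hadj; simp [ZMod.val_zero] at hadj
  have hab : (a - b).val = n - 1 := by
    have : a - b = -(b - a) := by ring
    rw [this, ZMod.neg_val, if_neg hba, hadj]
  rw [hadj] at hbig ⊢
  rw [hab]
  push_cast
  constructor <;> [intro h; intro h] <;> omega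
end

section
/- Under the hypotheses of the flip lemma (minimized disbursement s with s(p_i) − s(p_j) = n, all pebbles have distinct destinations so s(p) − s(q) ≠ d⁺(p,q) for p ≠ q, and flipped disbursement s' with s'(p_i) = s(p_i) − n, s'(p_j) = s(p_j) + n): for any pebble p_k ∉ {p_i, p_j}, p_k ≻ p_i holds under s' if and only if p_i and p_k were incomparable under s. -/
/-- The disbursement obtained from `s` by flipping the spins of `i` and `j`:
`s'(i) = s(i) − n`, `s'(j) = s(j) + n`, unchanged elsewhere. -/
def flipSpin (P : Type*) [DecidableEq P] (s : P → ℤ) (n : ℤ) (i j : P) : P → ℤ :=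
  fun p => if p = i then s i - n else if p = j then s j + n else s p

/-- Flip lemma, part (2) of Lemma 6: spins `s` form a minimized disbursement
(`s p − s q ≤ n`), pebbles have distinct destinations
(`s p − s q ≠ d⁺(p,q)` for `p ≠ q`), `s i − s j = n`, and `s'` is the flip.
Then for `k ∉ {i, j}`: `p_k ≻ p_i` under `s'` if and only if `p_i` and `p_k`
were incomparable under `s`. -/
theorem stmt9 (n : ℕ) [NeZero n] (P : Type*) [DecidableEq P]
    (pos : P → ZMod n) (hinj : Function.Injective pos)
    (s : P → ℤ) (hmin : ∀ p q : P, s p - s q ≤ n)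
    (hdest : ∀ p q : P, p ≠ q → s p - s q ≠ ((pos q - pos p).val : ℤ))
    (i j : P) (hij : i ≠ j) (hflip : s i - s j = n)
    (k : P) (hki : k ≠ i) (hkj : k ≠ j) :
    (flipSpin P s n i j k - flipSpin P s n i j i > ((pos i - pos k).val : ℤ)) ↔
      (¬ (s i - s k > ((pos k - pos i).val : ℤ)) ∧
       ¬ (s k - s i > ((pos i - pos k).val : ℤ))) := by
  have hne : pos k - pos i ≠ 0 := sub_ne_zero.mpr (fun h => hki (hinj h))
  have hsum : ((pos i - pos k).val : ℤ) + ((pos k - pos i).val : ℤ) = n := by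
    have : pos i - pos k = -(pos k - pos i) := by ring
    rw [this]
    haveI : NeZero (pos k - pos i) := ⟨hne⟩
    rw [ZMod.val_neg_of_ne_zero]
    have hlt := ZMod.val_lt (pos k - pos i)
    push_cast [Nat.sub_add_cancel hlt.le]
    omega
  have hge : (0 : ℤ) ≤ s i - s k := by
    have := hmin k j
    omega
  have h2 : s i - s k ≠ ((pos k - pos i).val : ℤ) := hdest i k (Ne.symm hki)
  simp only [flipSpin]
  rw [if_neg hki, if_neg hkj, if_pos trivial]
  constructor
  · intro h
    omega
  · intro ⟨ha, hb⟩
    omega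
end

section
/- Under the hypotheses of the flip lemma (minimized disbursement s with s(p_i) − s(p_j) = n, flipped to s' with s'(p_i) = s(p_i) − n, s'(p_j) = s(p_j) + n): if p_i ≻ p_k under s for some p_k ∉ {p_i, p_j}, then p_i and p_k are incomparable under s'. -/
/-- Flip lemma, part (3): spins `s` form a minimized disbursement
(`s p − s q ≤ n` for all pairs), `s i − s j = n`, and `s'` is the flip.
If `p_i ≻ p_k` under `s` for some `k ∉ {i, j}`, then `p_i` and `p_k` are
incomparable under `s'`. -/
theorem stmt10 (n : ℕ) [NeZero n] (P : Type*) [DecidableEq P]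
    (pos : P → ZMod n) (hinj : Function.Injective pos)
    (s : P → ℤ) (hmin : ∀ p q : P, s p - s q ≤ n)
    (i j : P) (hij : i ≠ j) (hflip : s i - s j = n)
    (k : P) (hki : k ≠ i) (hkj : k ≠ j)
    (hbig : s i - s k > ((pos k - pos i).val : ℤ)) :
    ¬ (flipSpin P s n i j i - flipSpin P s n i j k > ((pos k - pos i).val : ℤ)) ∧
    ¬ (flipSpin P s n i j k - flipSpin P s n i j i > ((pos i - pos k).val : ℤ)) := by
  have hne : pos k - pos i ≠ 0 := by
    intro h
    exact hki (hinj (by linear_combination h))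
  have hsum : ((pos k - pos i).val : ℤ) + ((pos i - pos k).val : ℤ) = n := by
    have : pos i - pos k = -(pos k - pos i) := by ring
    rw [this, ZMod.neg_val, if_neg hne]
    have := (pos k - pos i).val_lt
    push_cast [Nat.cast_sub (le_of_lt this)]
    ring
  have h1 : flipSpin P s n i j i = s i - n := by simp [flipSpin]
  have h2 : flipSpin P s n i j k = s k := by simp [flipSpin, hki, hkj]
  rw [h1, h2]
  have hmik := hmin i k
  have hpos : (0:ℤ) ≤ ((pos k - pos i).val : ℤ) := Int.ofNat_nonneg _
  omega
end

section
/- Let n ≥ 2 and let π be the rotation permutation of {1,…,n} given by π(a) ≡ a + q (mod n) for an integer q with 0 < q ≤ n/2. Then any routing of π on the cycle C_n requires at least n − q rounds; that is, rt(C_n, π) ≥ n − q. -/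
/-- One round of routing on the cycle `C_n`.  The configuration `σ` sends each
pebble to its current vertex.  A set `M` of vertices encodes the matching
`{(i, i+1) : i ∈ M}`; the matching condition is that no two chosen edges share
a vertex.  The pebbles on the endpoints of each chosen edge are swapped. -/
def CycleStep (n : ℕ) (σ τ : Equiv.Perm (ZMod n)) : Prop :=
  ∃ M : Finset (ZMod n), (∀ i ∈ M, i + 1 ∉ M) ∧
    ∀ p : ZMod n,
      τ p = if σ p ∈ M then σ p + 1 else if σ p - 1 ∈ M then σ p - 1 else σ p

/-- `RoutesIn n π k` : starting from the configuration where pebble `p` sits at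
vertex `π p`, `k` rounds of swaps along matchings of `C_n` bring every pebble
to its destination (pebble `p` to vertex `p`). -/
def RoutesIn (n : ℕ) (π : Equiv.Perm (ZMod n)) (k : ℕ) : Prop :=
  ∃ f : ℕ → Equiv.Perm (ZMod n), f 0 = π ∧ f k = 1 ∧
    ∀ t < k, CycleStep n (f t) (f (t + 1))

/-- The routing number `rt(C_n, π)`: the minimum number of rounds needed to
route the permutation `π` on the cycle `C_n`. -/
noncomputable def rt (n : ℕ) (π : Equiv.Perm (ZMod n)) : ℕ :=
  sInf {k | RoutesIn n π k}

/-!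
Track the signed number of steps `D p` each pebble makes. A round moves every pebble by at most
one step, and the moves in one round sum to zero (a pebble leaving a vertex along a matched edge
is replaced by the one coming the other way), so `|D p| ≤ k` after `k` rounds and `∑ p, D p = 0`.
For the rotation by `q`, every `D p` is congruent to `-q` modulo `n`, hence nonzero when
`0 < q < n`; as the `D p` sum to zero, some `D p` is positive, and then `D p ≥ n - q`.
The routing number is attained because adjacent transpositions generate the symmetric group.
-/

section Routing

variable {n : ℕ}

theorem cycleStep_self (σ : Equiv.Perm (ZMod n)) : CycleStep n σ σ :=
  ⟨∅, by simp, by simp⟩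

theorem cycleStep_swap_mul (i : ZMod n) (σ : Equiv.Perm (ZMod n)) :
    CycleStep n σ (Equiv.swap i (i + 1) * σ) := by
  by_cases hii : i + 1 = i
  · rw [hii, Equiv.swap_self, ← Equiv.Perm.one_def, one_mul]
    exact cycleStep_self σ
  refine ⟨{i}, by simpa using hii, fun p => ?_⟩
  simp only [Finset.mem_singleton, Equiv.Perm.mul_apply, sub_eq_iff_eq_add]
  by_cases h1 : σ p = i
  · simp [h1]
  by_cases h2 : σ p = i + 1
  · rw [if_neg h1, if_pos h2, h2, Equiv.swap_apply_right]; ring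
  · rw [if_neg h1, if_neg h2, Equiv.swap_apply_of_ne_of_ne h1 h2]

theorem routesIn_zero_iff {π : Equiv.Perm (ZMod n)} : RoutesIn n π 0 ↔ π = 1 :=
  ⟨fun ⟨f, h0, h1, _⟩ => h0 ▸ h1, fun h => ⟨fun _ => 1, h.symm, rfl, by simp⟩⟩

theorem routesIn_succ_iff {π : Equiv.Perm (ZMod n)} {k : ℕ} :
    RoutesIn n π (k + 1) ↔ ∃ σ, CycleStep n π σ ∧ RoutesIn n σ k := by
  constructor
  · rintro ⟨f, h0, hk, hstep⟩
    refine ⟨f 1, h0 ▸ hstep 0 (by omega), fun t => f (t + 1), rfl, hk, fun t ht => ?_⟩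
    exact hstep (t + 1) (by omega)
  · rintro ⟨σ, hπσ, f, h0, hk, hstep⟩
    refine ⟨fun t => Nat.casesOn t π f, rfl, hk, fun t ht => ?_⟩
    cases t with
    | zero => simpa [h0] using hπσ
    | succ t => exact hstep t (by omega)

theorem ZMod.mclosure_swap_add_one [NeZero n] :
    Submonoid.closure (Set.range fun i : ZMod n ↦ Equiv.swap i (i + 1)) = ⊤ := by
  obtain ⟨m, rfl⟩ : ∃ m, n = m + 1 := Nat.exists_eq_succ_of_ne_zero (NeZero.ne n)
  refine eq_top_iff.2 ((Equiv.Perm.mclosure_swap_castSucc_succ m).ge.trans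
    (Submonoid.closure_mono ?_))
  rintro _ ⟨i, rfl⟩
  exact ⟨i.castSucc, congrArg (Equiv.swap _) Fin.coeSucc_eq_succ⟩

theorem exists_routesIn [NeZero n] (π : Equiv.Perm (ZMod n)) : ∃ k, RoutesIn n π k := by
  have hπ : π ∈ Submonoid.closure (Set.range fun i : ZMod n ↦ Equiv.swap i (i + 1)) := by
    rw [ZMod.mclosure_swap_add_one]; trivial
  induction hπ using Submonoid.closure_induction_left with
  | one => exact ⟨0, routesIn_zero_iff.2 rfl⟩
  | mul_left _ hx σ _ ih =>
    obtain ⟨i, rfl⟩ := hx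
    obtain ⟨k, hk⟩ := ih
    have hstep := cycleStep_swap_mul i (Equiv.swap i (i + 1) * σ)
    rw [← mul_assoc, Equiv.swap_mul_self, one_mul] at hstep
    exact ⟨k + 1, routesIn_succ_iff.2 ⟨σ, hstep, hk⟩⟩

theorem CycleStep.exists_displacement [NeZero n] {σ τ : Equiv.Perm (ZMod n)} (h : CycleStep n σ τ) :
    ∃ d : ZMod n → ℤ, (∀ p, |d p| ≤ 1) ∧ (∀ p, τ p = σ p + d p) ∧ ∑ p, d p = 0 := by
  obtain ⟨M, hM, hτ⟩ := h
  -- a difference of indicators, so that the sum vanishes under the shift `v ↦ v - 1`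
  let e : ZMod n → ℤ := fun v => (if v ∈ M then 1 else 0) - (if v - 1 ∈ M then 1 else 0)
  refine ⟨fun p => e (σ p), fun p => by simp only [e]; split_ifs <;> simp, fun p => ?_, ?_⟩
  · have hM' : σ p ∈ M → σ p - 1 ∉ M := fun hv hv' => hM _ hv' (by rwa [sub_add_cancel])
    rw [hτ]
    simp only [e]
    split_ifs <;> simp_all [sub_eq_add_neg]
  · rw [Equiv.sum_comp σ e, Finset.sum_sub_distrib, sub_eq_zero]
    exact (Equiv.sum_comp (Equiv.subRight 1) (fun v => if v ∈ M then (1 : ℤ) else 0)).symm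

theorem RoutesIn.exists_displacement [NeZero n] {π : Equiv.Perm (ZMod n)} {k : ℕ}
    (h : RoutesIn n π k) :
    ∃ D : ZMod n → ℤ, (∀ p, |D p| ≤ k) ∧ (∀ p, π p + D p = p) ∧ ∑ p, D p = 0 := by
  induction k generalizing π with
  | zero => exact ⟨0, by simp, by simp [routesIn_zero_iff.1 h], by simp⟩
  | succ k ih =>
    obtain ⟨σ, hstep, hσ⟩ := routesIn_succ_iff.1 h
    obtain ⟨d, hd1, hdσ, hdsum⟩ := hstep.exists_displacement
    obtain ⟨D, hDk, hDσ, hDsum⟩ := ih hσ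
    refine ⟨d + D, fun p => ?_, fun p => ?_, by simp [Finset.sum_add_distrib, hdsum, hDsum]⟩
    · calc |d p + D p| ≤ |d p| + |D p| := abs_add_le _ _
        _ ≤ 1 + k := add_le_add (hd1 p) (hDk p)
        _ = (k + 1 : ℕ) := by push_cast; ring
    · rw [Pi.add_apply, Int.cast_add, ← add_assoc, ← hdσ, hDσ]

theorem le_of_routesIn_addRight {q k : ℕ} (hq : 0 < q) (hqn : q < n)
    (h : RoutesIn n (Equiv.addRight (q : ZMod n)) k) : n - q ≤ k := by
  have : NeZero n := ⟨by omega⟩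
  obtain ⟨D, hDk, hD, hDsum⟩ := h.exists_displacement
  have hdvd : ∀ p, (n : ℤ) ∣ D p + q := fun p => by
    rw [← ZMod.intCast_zmod_eq_zero_iff_dvd]
    have := hD p
    simp only [Equiv.coe_addRight] at this
    push_cast
    linear_combination this
  have hne : ∀ p, D p ≠ 0 := fun p hp => by
    have := Int.le_of_dvd (by omega) (hp ▸ hdvd p)
    omega
  obtain ⟨p, -, hpos⟩ :=
    Finset.exists_pos_of_sum_zero_of_exists_nonzero D hDsum ⟨0, Finset.mem_univ _, hne 0⟩
  have hnD : (n : ℤ) ≤ D p + q := Int.le_of_dvd (by omega) (hdvd p)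
  have hDp : D p ≤ k := (le_abs_self _).trans (hDk p)
  omega

end Routing

theorem stmt11_general (n q : ℕ) (hq : 0 < q) :
    (∀ k : ℕ, RoutesIn n (Equiv.addRight (q : ZMod n)) k → n - q ≤ k) ∧
    n - q ≤ rt n (Equiv.addRight (q : ZMod n)) := by
  rcases le_or_gt n q with hnq | hqn
  · exact ⟨fun _ _ => by omega, by omega⟩
  have : NeZero n := ⟨by omega⟩
  have hlower : ∀ k, RoutesIn n (Equiv.addRight (q : ZMod n)) k → n - q ≤ k :=
    fun _ => le_of_routesIn_addRight hq hqn
  exact ⟨hlower, hlower _ (Nat.sInf_mem (exists_routesIn _))⟩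

/-- Lower bound of the Rotation Lemma: for the rotation `π(a) = a + q` on `C_n`
with `0 < q ≤ n/2`, any routing needs at least `n − q` rounds, i.e.
`rt(C_n, π) ≥ n − q`. -/
theorem stmt11 (n q : ℕ) (hn : 2 ≤ n) (hq : 0 < q) (hq2 : 2 * q ≤ n) :
    (∀ k : ℕ, RoutesIn n (Equiv.addRight (q : ZMod n)) k → n - q ≤ k) ∧
    n - q ≤ rt n (Equiv.addRight (q : ZMod n)) :=
  stmt11_general n q hq
end

section
/- Let n ≥ 2 be even and let π be the rotation of {1,…,n} with π(a) ≡ a + q (mod n), 0 < q ≤ n/2. Then rt(C_n, π) ≤ n − q; combined with the lower bound, rt(C_n, π) = n − q. In particular rt(C_n, (12⋯n)) = n − 1. -/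
/-- helper: integer-cast equality in `ZMod n` from divisibility. -/
theorem RoutingAux.cast_eq_of_dvd {n : ℕ} {a b : ℤ} (h : (n:ℤ) ∣ a - b) :
    ((a : ℤ) : ZMod n) = ((b : ℤ) : ZMod n) := by
  have h2 : ((a - b : ℤ) : ZMod n) = 0 := (ZMod.intCast_zmod_eq_zero_iff_dvd _ n).mpr h
  push_cast at h2
  linear_combination h2

theorem RoutingAux.dvd_of_cast_eq {n : ℕ} {a b : ℤ} (h : ((a : ℤ) : ZMod n) = ((b : ℤ) : ZMod n)) :
    (n:ℤ) ∣ a - b := by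
  rw [← ZMod.intCast_zmod_eq_zero_iff_dvd]
  push_cast
  linear_combination h

def RoutingAux.Mset (n q t : ℕ) : Finset (ZMod n) :=
  (Finset.range q).image (fun j => ((2*j + t : ℕ) : ZMod n))

theorem RoutingAux.mem_Mset {n q t : ℕ} (j : ℕ) (hj : j < q) (y : ZMod n) (e : ℤ)
    (hy : y = ((e : ℤ) : ZMod n)) (hd : (n:ℤ) ∣ (2*j + t : ℤ) - e) :
    y ∈ RoutingAux.Mset n q t := by
  refine Finset.mem_image.mpr ⟨j, Finset.mem_range.mpr hj, ?_⟩
  rw [hy, ← RoutingAux.cast_eq_of_dvd hd]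
  push_cast
  ring

theorem RoutingAux.not_mem_Mset {n q t : ℕ} (y : ZMod n) (e : ℤ)
    (hy : y = ((e : ℤ) : ZMod n))
    (h : ∀ j : ℕ, j < q → ¬ (n:ℤ) ∣ (2*j + t : ℤ) - e) : y ∉ RoutingAux.Mset n q t := by
  intro hmem
  obtain ⟨j, hj, hje⟩ := Finset.mem_image.mp hmem
  refine h j (Finset.mem_range.mp hj) (RoutingAux.dvd_of_cast_eq ?_)
  rw [hy] at hje
  rw [← hje]
  push_cast
  ring

theorem RoutingAux.mset_matching {n q t m : ℕ} (hm : n = 2*m) :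
    ∀ i ∈ RoutingAux.Mset n q t, i + 1 ∉ RoutingAux.Mset n q t := by
  intro i hi hcon
  obtain ⟨j, hj, rfl⟩ := Finset.mem_image.mp hi
  obtain ⟨j', hj', h⟩ := Finset.mem_image.mp hcon
  have hd : (n:ℤ) ∣ (2*j' + t : ℤ) - (2*j + t + 1) := by
    apply RoutingAux.dvd_of_cast_eq
    push_cast at h ⊢
    linear_combination h
  have h2 : (2:ℤ) ∣ ((2*j' + t : ℤ) - (2*j + t + 1)) := dvd_trans ⟨(m:ℤ), by omega⟩ hd
  omega

def RoutingAux.matchFn (n : ℕ) (M : Finset (ZMod n)) (x : ZMod n) : ZMod n :=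
  if x ∈ M then x + 1 else if x - 1 ∈ M then x - 1 else x

theorem RoutingAux.matchFn_involutive {n : ℕ} {M : Finset (ZMod n)}
    (hM : ∀ i ∈ M, i + 1 ∉ M) : Function.Involutive (RoutingAux.matchFn n M) := by
  intro x
  by_cases h1 : x ∈ M
  · have e1 : RoutingAux.matchFn n M x = x + 1 := by
      unfold RoutingAux.matchFn; rw [if_pos h1]
    rw [e1]
    unfold RoutingAux.matchFn
    rw [if_neg (hM x h1), add_sub_cancel_right, if_pos h1]
  · by_cases h2 : x - 1 ∈ M
    · have e1 : RoutingAux.matchFn n M x = x - 1 := by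
        unfold RoutingAux.matchFn; rw [if_neg h1, if_pos h2]
      have h3 : x - 1 + 1 = x := sub_add_cancel x 1
      rw [e1]
      unfold RoutingAux.matchFn
      rw [if_pos h2, h3]
    · have e1 : RoutingAux.matchFn n M x = x := by
        unfold RoutingAux.matchFn; rw [if_neg h1, if_neg h2]
      rw [e1, e1]


def RoutingAux.cfun (n q t u : ℕ) : ℕ :=
  if u < 2*q then min (u/2+1) t + (min q (t + 2*q - n) - (u/2+1))
  else min q (t + 2*q - 1 - u)

def RoutingAux.Gfun (n q t : ℕ) (x : ZMod n) : ZMod n :=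
  if x.val % 2 = 0 ∧ x.val < 2*q then (((x.val : ℤ) + (t:ℤ) : ℤ) : ZMod n)
  else (((x.val : ℤ) - (RoutingAux.cfun n q t x.val : ℤ) : ℤ) : ZMod n)

theorem RoutingAux.Gfun_zero {n q : ℕ} [NeZero n] (hq2 : 2*q ≤ n) (x : ZMod n) :
    RoutingAux.Gfun n q 0 x = x := by
  have hxu : ((x.val : ℤ) : ZMod n) = x := by rw [Int.cast_natCast, ZMod.natCast_zmod_val]
  unfold RoutingAux.Gfun
  split_ifs with h
  · simpa using hxu
  · have hc : RoutingAux.cfun n q 0 x.val = 0 := by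
      unfold RoutingAux.cfun; split_ifs <;> omega
    rw [hc]
    simpa using hxu

theorem RoutingAux.Gfun_final {n q m : ℕ} (hm : n = 2*m) (hq : 0 < q) (hq2 : 2*q ≤ n)
    (y : ZMod n) :
    RoutingAux.Gfun n q (n - q) y = y - (q : ZMod n) := by
  haveI : NeZero n := ⟨by omega⟩
  have hun : y.val < n := ZMod.val_lt y
  have hxu : ((y.val : ℤ) : ZMod n) = y := by rw [Int.cast_natCast, ZMod.natCast_zmod_val]
  unfold RoutingAux.Gfun
  split_ifs with h
  · have e : (((y.val:ℤ) + ((n-q : ℕ):ℤ) : ℤ) : ZMod n) = (((y.val:ℤ) - (q:ℤ) : ℤ) : ZMod n) :=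
      RoutingAux.cast_eq_of_dvd ⟨1, by omega⟩
    rw [e]
    push_cast [ZMod.natCast_zmod_val]
    ring
  · have hc : RoutingAux.cfun n q (n-q) y.val = q := by
      unfold RoutingAux.cfun; split_ifs with h2 <;> omega
    rw [hc]
    push_cast [ZMod.natCast_zmod_val]
    ring

set_option maxHeartbeats 2000000 in
theorem RoutingAux.step_lemma {n q m : ℕ} (hm : n = 2*m) (hq : 0 < q) (hq2 : 2*q ≤ n)
    {t : ℕ} (ht : t < n - q) (x : ZMod n) :
    RoutingAux.matchFn n (RoutingAux.Mset n q t) (RoutingAux.Gfun n q t x)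
      = RoutingAux.Gfun n q (t+1) x := by
  haveI : NeZero n := ⟨by omega⟩
  have hun : x.val < n := ZMod.val_lt x
  have h2n : (2:ℤ) ∣ (n:ℤ) := ⟨(m:ℤ), by omega⟩
  by_cases hplus : x.val % 2 = 0 ∧ x.val < 2*q
  · -- "+" pebble: always moves clockwise
    have hG1 : RoutingAux.Gfun n q t x = (((x.val:ℤ) + (t:ℤ) : ℤ) : ZMod n) := by
      unfold RoutingAux.Gfun; rw [if_pos hplus]
    have hG2 : RoutingAux.Gfun n q (t+1) x = (((x.val:ℤ) + ((t:ℤ)+1) : ℤ) : ZMod n) := by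
      unfold RoutingAux.Gfun; rw [if_pos hplus]; push_cast; ring
    have hmem : RoutingAux.Gfun n q t x ∈ RoutingAux.Mset n q t := by
      refine RoutingAux.mem_Mset (x.val/2) (by omega) _ _ hG1 ?_
      have h0 : (2*((x.val/2 : ℕ):ℤ) + (t:ℤ) : ℤ) - ((x.val:ℤ) + (t:ℤ)) = 0 := by omega
      rw [h0]
      exact dvd_zero _
    unfold RoutingAux.matchFn
    rw [if_pos hmem, hG1, hG2]
    push_cast
    ring
  · -- "−" pebble
    have hG1 : RoutingAux.Gfun n q t x
        = (((x.val:ℤ) - (RoutingAux.cfun n q t x.val : ℤ) : ℤ) : ZMod n) := by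
      unfold RoutingAux.Gfun; rw [if_neg hplus]
    have hG2 : RoutingAux.Gfun n q (t+1) x
        = (((x.val:ℤ) - (RoutingAux.cfun n q (t+1) x.val : ℤ) : ℤ) : ZMod n) := by
      unfold RoutingAux.Gfun; rw [if_neg hplus]
    have hG1' : RoutingAux.Gfun n q t x - 1
        = (((x.val:ℤ) - (RoutingAux.cfun n q t x.val : ℤ) - 1 : ℤ) : ZMod n) := by
      rw [hG1]; push_cast; ring
    by_cases hin : x.val < 2*q
    · -- "−" pebble inside the initial "+" block: x.val odd
      have hodd : x.val % 2 = 1 := by omega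
      have hc1 : RoutingAux.cfun n q t x.val
          = min (x.val/2+1) t + (min q (t + 2*q - n) - (x.val/2+1)) := by
        unfold RoutingAux.cfun; rw [if_pos hin]
      have hc2 : RoutingAux.cfun n q (t+1) x.val
          = min (x.val/2+1) (t+1) + (min q (t+1 + 2*q - n) - (x.val/2+1)) := by
        unfold RoutingAux.cfun; rw [if_pos hin]
      have hnm : RoutingAux.Gfun n q t x ∉ RoutingAux.Mset n q t := by
        refine RoutingAux.not_mem_Mset _ _ hG1 ?_
        intro j hj hd
        by_cases hR : x.val/2 + 1 ≤ t ∧ t ≤ n - 2*q + x.val/2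
        · -- middle region: size contradiction
          have h0 := Int.eq_zero_of_abs_lt_dvd hd
            (abs_lt.mpr ⟨by omega, by omega⟩)
          omega
        · -- moving regions: parity contradiction
          have h0 : (2:ℤ) ∣ ((2*j + t : ℤ) - ((x.val:ℤ) - (RoutingAux.cfun n q t x.val : ℤ))) :=
            dvd_trans h2n hd
          omega
      by_cases hR1 : t ≤ x.val/2
      · -- phase 1 : move
        have hmem : RoutingAux.Gfun n q t x - 1 ∈ RoutingAux.Mset n q t := by
          refine RoutingAux.mem_Mset (x.val/2 - t) (by omega) _ _ hG1' ?_
          have h0 : (2*((x.val/2 - t : ℕ):ℤ) + (t:ℤ) : ℤ)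
              - ((x.val:ℤ) - (RoutingAux.cfun n q t x.val : ℤ) - 1) = 0 := by omega
          rw [h0]
          exact dvd_zero _
        unfold RoutingAux.matchFn
        rw [if_neg hnm, if_pos hmem, hG1', hG2]
        have hc : RoutingAux.cfun n q (t+1) x.val = RoutingAux.cfun n q t x.val + 1 := by omega
        rw [hc]; push_cast; ring
      · by_cases hR3 : n - 2*q + x.val/2 + 1 ≤ t
        · -- phase 2 : move (wrapped)
          have hmem : RoutingAux.Gfun n q t x - 1 ∈ RoutingAux.Mset n q t := by
            refine RoutingAux.mem_Mset (x.val/2 + n - q - t) (by omega) _ _ hG1' ?_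
            have h0 : (2*((x.val/2 + n - q - t : ℕ):ℤ) + (t:ℤ) : ℤ)
                - ((x.val:ℤ) - (RoutingAux.cfun n q t x.val : ℤ) - 1) = (n:ℤ) := by omega
            rw [h0]
          unfold RoutingAux.matchFn
          rw [if_neg hnm, if_pos hmem, hG1', hG2]
          have hc : RoutingAux.cfun n q (t+1) x.val = RoutingAux.cfun n q t x.val + 1 := by omega
          rw [hc]; push_cast; ring
        · -- middle region : stay
          have hnm1 : RoutingAux.Gfun n q t x - 1 ∉ RoutingAux.Mset n q t := by
            refine RoutingAux.not_mem_Mset _ _ hG1' ?_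
            intro j hj hd
            have h0 := Int.eq_zero_of_abs_lt_dvd hd
              (abs_lt.mpr ⟨by omega, by omega⟩)
            omega
          unfold RoutingAux.matchFn
          rw [if_neg hnm, if_neg hnm1, hG1, hG2]
          have hc : RoutingAux.cfun n q (t+1) x.val = RoutingAux.cfun n q t x.val := by omega
          rw [hc]
    · -- "−" pebble outside the initial "+" block
      have hout : 2*q ≤ x.val := by omega
      have hc1 : RoutingAux.cfun n q t x.val = min q (t + 2*q - 1 - x.val) := by
        unfold RoutingAux.cfun; rw [if_neg hin]
      have hc2 : RoutingAux.cfun n q (t+1) x.val = min q (t+1 + 2*q - 1 - x.val) := by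
        unfold RoutingAux.cfun; rw [if_neg hin]
      by_cases hS : x.val - 2*q + 1 ≤ t ∧ t + q ≤ x.val
      · -- sweeping window : move
        have hnm : RoutingAux.Gfun n q t x ∉ RoutingAux.Mset n q t := by
          refine RoutingAux.not_mem_Mset _ _ hG1 ?_
          intro j hj hd
          have h0 : (2:ℤ) ∣ ((2*j + t : ℤ) - ((x.val:ℤ) - (RoutingAux.cfun n q t x.val : ℤ))) :=
            dvd_trans h2n hd
          omega
        have hmem : RoutingAux.Gfun n q t x - 1 ∈ RoutingAux.Mset n q t := by
          refine RoutingAux.mem_Mset (x.val - q - t) (by omega) _ _ hG1' ?_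
          have h0 : (2*((x.val - q - t : ℕ):ℤ) + (t:ℤ) : ℤ)
              - ((x.val:ℤ) - (RoutingAux.cfun n q t x.val : ℤ) - 1) = 0 := by omega
          rw [h0]
          exact dvd_zero _
        unfold RoutingAux.matchFn
        rw [if_neg hnm, if_pos hmem, hG1', hG2]
        have hc : RoutingAux.cfun n q (t+1) x.val = RoutingAux.cfun n q t x.val + 1 := by omega
        rw [hc]; push_cast; ring
      · -- before/after the window : stay
        have hnm : RoutingAux.Gfun n q t x ∉ RoutingAux.Mset n q t := by
          refine RoutingAux.not_mem_Mset _ _ hG1 ?_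
          intro j hj hd
          have h0 := Int.eq_zero_of_abs_lt_dvd hd
            (abs_lt.mpr ⟨by omega, by omega⟩)
          omega
        have hnm1 : RoutingAux.Gfun n q t x - 1 ∉ RoutingAux.Mset n q t := by
          refine RoutingAux.not_mem_Mset _ _ hG1' ?_
          intro j hj hd
          have h0 := Int.eq_zero_of_abs_lt_dvd hd
            (abs_lt.mpr ⟨by omega, by omega⟩)
          omega
        unfold RoutingAux.matchFn
        rw [if_neg hnm, if_neg hnm1, hG1, hG2]
        have hc : RoutingAux.cfun n q (t+1) x.val = RoutingAux.cfun n q t x.val := by omega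
        rw [hc]

theorem RoutingAux.upper {n q m : ℕ} (hm : n = 2*m) (hq : 0 < q) (hq2 : 2*q ≤ n) :
    RoutesIn n (Equiv.addRight (q : ZMod n)) (n - q) := by
  haveI : NeZero n := ⟨by omega⟩
  refine ⟨fun t => Nat.rec (motive := fun _ => Equiv.Perm (ZMod n))
      (Equiv.addRight (q : ZMod n))
      (fun t acc => acc.trans
        ((RoutingAux.matchFn_involutive (RoutingAux.mset_matching (q := q) (t := t) hm)).toPerm))
      t, rfl, ?_, ?_⟩
  · refine Equiv.ext fun p => ?_
    have key : ∀ t, t ≤ n - q →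
        (Nat.rec (motive := fun _ => Equiv.Perm (ZMod n))
          (Equiv.addRight (q : ZMod n))
          (fun t acc => acc.trans
            ((RoutingAux.matchFn_involutive (RoutingAux.mset_matching (q := q) (t := t) hm)).toPerm))
          t) p = RoutingAux.Gfun n q t (p + (q : ZMod n)) := by
      intro t
      induction t with
      | zero => intro _; exact (RoutingAux.Gfun_zero hq2 _).symm
      | succ t ih =>
        intro h
        have ht : t < n - q := by omega
        have e : (Nat.rec (motive := fun _ => Equiv.Perm (ZMod n))
            (Equiv.addRight (q : ZMod n))
            (fun t acc => acc.trans
              ((RoutingAux.matchFn_involutive (RoutingAux.mset_matching (q := q) (t := t) hm)).toPerm))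
            (t+1)) p
            = RoutingAux.matchFn n (RoutingAux.Mset n q t)
              ((Nat.rec (motive := fun _ => Equiv.Perm (ZMod n))
                (Equiv.addRight (q : ZMod n))
                (fun t acc => acc.trans
                  ((RoutingAux.matchFn_involutive (RoutingAux.mset_matching (q := q) (t := t) hm)).toPerm))
                t) p) := rfl
        rw [e, ih (by omega)]
        exact RoutingAux.step_lemma hm hq hq2 ht _
    rw [key (n - q) le_rfl, RoutingAux.Gfun_final hm hq hq2, add_sub_cancel_right]
    rfl
  · intro t ht
    exact ⟨RoutingAux.Mset n q t, RoutingAux.mset_matching hm, fun p => rfl⟩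

theorem RoutingAux.lower {n q m : ℕ} (hm : n = 2*m) (hq : 0 < q) (hq2 : 2*q ≤ n) {k : ℕ}
    (hk : RoutesIn n (Equiv.addRight (q : ZMod n)) k) : n - q ≤ k := by
  haveI : NeZero n := ⟨by omega⟩
  by_contra hlt
  push_neg at hlt
  obtain ⟨f, hf0, hfk, hstep⟩ := hk
  have hM : ∀ t, ∃ M : Finset (ZMod n), (∀ i ∈ M, i + 1 ∉ M) ∧
      (t < k → ∀ p, f (t+1) p
        = if f t p ∈ M then f t p + 1 else if f t p - 1 ∈ M then f t p - 1 else f t p) := by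
    intro t
    by_cases h : t < k
    · obtain ⟨M, h1, h2⟩ := hstep t h
      exact ⟨M, h1, fun _ => h2⟩
    · exact ⟨∅, by simp, fun h' => absurd h' h⟩
  choose M hM1 hM2 using hM
  set s : ℕ → ZMod n → ℤ := fun t p =>
    if f t p ∈ M t then 1 else if f t p - 1 ∈ M t then -1 else 0 with hs
  set d : ℕ → ZMod n → ℤ := fun t p => ∑ i ∈ Finset.range t, s i p with hd
  have hdd : ∀ t p, d (t+1) p = d t p + s t p := by
    intro t p; simp only [hd, Finset.sum_range_succ]
  have hpos : ∀ t, t ≤ k → ∀ p, f t p = p + (q : ZMod n) + ((d t p : ℤ) : ZMod n) := by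
    intro t
    induction t with
    | zero =>
      intro _ p
      simp only [hd, Finset.range_zero, Finset.sum_empty, Int.cast_zero, add_zero, hf0]
      rfl
    | succ t ih =>
      intro h p
      have h' : t < k := by omega
      have e := hM2 t h' p
      have hsv : s t p = if f t p ∈ M t then 1 else if f t p - 1 ∈ M t then -1 else 0 := rfl
      by_cases h1 : f t p ∈ M t
      · rw [e, if_pos h1, hdd, hsv, if_pos h1, ih (by omega) p]
        push_cast; ring
      · by_cases h2 : f t p - 1 ∈ M t
        · rw [e, if_neg h1, if_pos h2, hdd, hsv, if_neg h1, if_pos h2, ih (by omega) p]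
          push_cast; ring
        · rw [e, if_neg h1, if_neg h2, hdd, hsv, if_neg h1, if_neg h2, ih (by omega) p]
          push_cast; ring
  have hsb : ∀ t p, -1 ≤ s t p ∧ s t p ≤ 1 := by
    intro t p; simp only [hs]; split_ifs <;> omega
  have hb : ∀ (t : ℕ) (p : ZMod n), -(t:ℤ) ≤ d t p ∧ d t p ≤ (t:ℤ) := by
    intro t p
    induction t with
    | zero => simp [hd]
    | succ t ih =>
      have := hsb t p
      rw [hdd]
      push_cast
      omega
  have hsum : ∀ t, t < k → ∑ p : ZMod n, s t p = 0 := by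
    intro t htk
    have hre : ∑ p : ZMod n, s t p
        = ∑ v : ZMod n, (if v ∈ M t then (1:ℤ) else if v - 1 ∈ M t then -1 else 0) :=
      Equiv.sum_comp (f t) (fun v => if v ∈ M t then (1:ℤ) else if v - 1 ∈ M t then -1 else 0)
    rw [hre]
    have hsplit : ∀ v : ZMod n, (if v ∈ M t then (1:ℤ) else if v - 1 ∈ M t then -1 else 0)
        = (if v ∈ M t then (1:ℤ) else 0) + (if v - 1 ∈ M t then (-1:ℤ) else 0) := by
      intro v
      by_cases h1 : v ∈ M t
      · have h2 : v - 1 ∉ M t := fun h => (hM1 t _ h) (by rwa [sub_add_cancel])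
        rw [if_pos h1, if_pos h1, if_neg h2]; ring
      · rw [if_neg h1, if_neg h1]; split_ifs <;> ring
    rw [Finset.sum_congr rfl (fun v _ => hsplit v), Finset.sum_add_distrib]
    have e1 : ∑ v : ZMod n, (if v ∈ M t then (1:ℤ) else 0) = ((M t).card : ℤ) := by
      rw [Finset.sum_ite_mem, Finset.univ_inter, Finset.sum_const, nsmul_eq_mul, mul_one]
    have e2 : ∑ v : ZMod n, (if v - 1 ∈ M t then (-1:ℤ) else 0) = -((M t).card : ℤ) := by
      have e3 := Equiv.sum_comp (Equiv.addRight (1 : ZMod n))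
        (fun v => if v - 1 ∈ M t then (-1:ℤ) else 0)
      rw [← e3]
      simp only [Equiv.coe_addRight, add_sub_cancel_right]
      rw [Finset.sum_ite_mem, Finset.univ_inter, Finset.sum_const, nsmul_eq_mul]
      ring
    rw [e1, e2]
    ring
  have htot : ∑ p : ZMod n, d k p = 0 := by
    simp only [hd]
    rw [Finset.sum_comm]
    exact Finset.sum_eq_zero (fun i hi => hsum i (Finset.mem_range.mp hi))
  have hval : ∀ p : ZMod n, d k p = -(q:ℤ) := by
    intro p
    have h1 : f k p = p := by rw [hfk]; rfl
    have h2 := hpos k le_rfl p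
    rw [h1] at h2
    have h3 : ((d k p + (q:ℤ) : ℤ) : ZMod n) = 0 := by
      push_cast
      linear_combination -h2
    have hdvd := (ZMod.intCast_zmod_eq_zero_iff_dvd _ n).mp h3
    have hbk := hb k p
    have h0 := Int.eq_zero_of_abs_lt_dvd hdvd (abs_lt.mpr ⟨by omega, by omega⟩)
    omega
  have hq0 : (0:ℤ) = -((n:ℤ) * q) := by
    rw [← htot, Finset.sum_congr rfl (fun p _ => hval p), Finset.sum_const,
      Finset.card_univ, ZMod.card, nsmul_eq_mul]
    ring
  have hpos' : 0 < (n:ℤ) * q := mul_pos (by omega) (by omega)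
  omega


theorem RoutingAux.rt_eq {n q m : ℕ} (hm : n = 2*m) (hq : 0 < q) (hq2 : 2*q ≤ n) :
    rt n (Equiv.addRight (q : ZMod n)) = n - q := by
  have hup := RoutingAux.upper hm hq hq2
  refine le_antisymm (Nat.sInf_le hup) (le_csInf ⟨_, hup⟩ ?_)
  intro k hk
  exact RoutingAux.lower hm hq hq2 hk


/-- Rotation Lemma (even cycles): for the rotation `π(a) = a + q` on `C_n`
(`n` even, `0 < q ≤ n/2`), `rt(C_n, π) = n − q`.  In particular, the full
rotation `(12⋯n)` (i.e. `q = 1`) satisfies `rt(C_n, (12⋯n)) = n − 1`. -/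
theorem stmt12 (n q : ℕ) (hn : 2 ≤ n) (he : Even n) (hq : 0 < q) (hq2 : 2 * q ≤ n) :
    rt n (Equiv.addRight (q : ZMod n)) = n - q ∧
    rt n (Equiv.addRight (1 : ZMod n)) = n - 1 := by
  obtain ⟨m, hm'⟩ := he
  have hm : n = 2*m := by omega
  constructor
  · exact RoutingAux.rt_eq hm hq hq2
  · have h1 := RoutingAux.rt_eq (q := 1) hm one_pos (by omega)
    simpa using h1
end

section
/- Let p be a pebble and Q a segment of consecutive pebbles on C_n with p ≻ q for all q ∈ Q (under a minimized disbursement), and run the odd-even routing algorithm (alternating the two perfect matchings of the even cycle, swapping an edge exactly when the clockwise endpoint's pebble is bigger than the counterclockwise endpoint's pebble). Then once p swaps with some pebble of Q, p performs a swap in every one of the following |Q| − 1 rounds, i.e., p swaps consecutively until it has passed all pebbles of Q. -/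
/-- In the odd-even routing algorithm at round `t`, the edge `(v, v+1)` of `C_n`
is active iff it belongs to the matching used in round `t` (the parity of `v`
matches the parity of `t`) and the pebble on its counterclockwise endpoint `v`
is bigger than the pebble on its clockwise endpoint `v + 1` (for adjacent
pebbles, `p ≻ q` means `s p − s q > d⁺ = 1`).  Here `pos : P ≃ ZMod n` is the
current configuration and `s` the current spins. -/
def Active (n : ℕ) {P : Type*} (pos : P ≃ ZMod n) (s : P → ℤ) (t : ℕ) (v : ZMod n) : Prop :=
  v.val % 2 = t % 2 ∧ s (pos.symm v) - s (pos.symm (v + 1)) > 1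

/-- `OddEvenRun n pos s` : the sequence of configurations `pos t : P ≃ ZMod n`
and spins `s t : P → ℤ` evolves by the odd-even routing algorithm, alternating
the two perfect matchings of the even cycle and swapping an edge exactly when
the counterclockwise endpoint's pebble is bigger than the clockwise endpoint's
pebble; a pebble moving one step clockwise loses one unit of spin, and one
moving counterclockwise gains one. -/
def OddEvenRun (n : ℕ) {P : Type*} (pos : ℕ → P ≃ ZMod n) (s : ℕ → P → ℤ) : Prop :=
  ∀ (t : ℕ) (p : P),
    (Active n (pos t) (s t) t (pos t p) →
      pos (t + 1) p = pos t p + 1 ∧ s (t + 1) p = s t p - 1) ∧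
    (Active n (pos t) (s t) t (pos t p - 1) →
      pos (t + 1) p = pos t p - 1 ∧ s (t + 1) p = s t p + 1) ∧
    (¬ Active n (pos t) (s t) t (pos t p) → ¬ Active n (pos t) (s t) t (pos t p - 1) →
      pos (t + 1) p = pos t p ∧ s (t + 1) p = s t p)


namespace Stmt19

variable {n : ℕ} [NeZero n]

lemma val_inj {a b : ZMod n} (h : a.val = b.val) : a = b := by
  have := congrArg (fun m : ℕ => (m : ZMod n)) h
  simpa [ZMod.natCast_rightInverse a, ZMod.natCast_rightInverse b] using this

lemma val_add_one {v : ZMod n} (h : v + 1 ≠ 0) : (v + 1).val = v.val + 1 := by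
  have h1 : (1 : ZMod n).val = 1 % n := by
    have : ((1 : ℕ) : ZMod n) = (1 : ZMod n) := by push_cast; ring
    rw [← this, ZMod.val_natCast]
  have hlt : v.val < n := ZMod.val_lt v
  rcases Nat.lt_or_ge n 2 with h2 | h2
  · interval_cases n
    · exact absurd rfl (NeZero.ne 0)
    · exact absurd (Subsingleton.elim (v+1) 0) h
  · have h1' : (1 : ZMod n).val = 1 := by rw [h1, Nat.mod_eq_of_lt h2]
    rw [ZMod.val_add, h1']
    have hne : v.val + 1 ≠ n := by
      intro hc
      apply h
      have : v + 1 = ((v.val + 1 : ℕ) : ZMod n) := by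
        push_cast [ZMod.natCast_rightInverse v]; ring
      rw [this, hc, ZMod.natCast_self]
    exact Nat.mod_eq_of_lt (by omega)

lemma val_sub_one {v : ZMod n} (h : v ≠ 0) : (v - 1).val = v.val - 1 := by
  have hv : v.val ≠ 0 := fun hc => h ((ZMod.val_eq_zero v).1 hc)
  have h' : (v - 1) + 1 ≠ 0 := by simpa using h
  have := val_add_one h'
  simp only [sub_add_cancel] at this
  omega

lemma parity_succ (he : Even n) (hn : 3 ≤ n) (v : ZMod n) :
    (v + 1).val % 2 ≠ v.val % 2 := by
  have hlt : v.val < n := ZMod.val_lt v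
  have hn2 : n % 2 = 0 := Nat.even_iff.1 he
  by_cases h : v + 1 = 0
  · have hv : v = -1 := by rw [eq_neg_iff_add_eq_zero]; exact h
    have hval : v.val = n - 1 := by
      rw [hv]
      have : (-1 : ZMod n) = ((n - 1 : ℕ) : ZMod n) := by
        push_cast [Nat.cast_sub (by omega : 1 ≤ n)]
        simp
      rw [this, ZMod.val_natCast, Nat.mod_eq_of_lt (by omega)]
    rw [h, hval]
    simp only [ZMod.val_zero]
    omega
  · rw [val_add_one h]; omega

lemma one_ne_zero' (hn : 3 ≤ n) : (1 : ZMod n) ≠ 0 := by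
  intro h
  have : ((1:ℕ) : ZMod n) = ((0:ℕ) : ZMod n) := by push_cast; simpa using h
  have h2 := (ZMod.natCast_eq_natCast_iff' 1 0 n).1 this
  rw [Nat.mod_eq_of_lt (by omega), Nat.mod_eq_of_lt (by omega)] at h2
  omega

lemma val_one' (hn : 3 ≤ n) : (1 : ZMod n).val = 1 := by
  have : ((1 : ℕ) : ZMod n) = (1 : ZMod n) := by push_cast; ring
  rw [← this, ZMod.val_natCast, Nat.mod_eq_of_lt (by omega)]

lemma val_neg_one' (hn : 3 ≤ n) : (-1 : ZMod n).val = n - 1 := by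
  have : (-1 : ZMod n) = ((n - 1 : ℕ) : ZMod n) := by
    push_cast [Nat.cast_sub (by omega : 1 ≤ n)]; simp
  rw [this, ZMod.val_natCast, Nat.mod_eq_of_lt (by omega)]

section Run

variable {P : Type*} (pos : ℕ → P ≃ ZMod n) (s : ℕ → P → ℤ) (pb : P)

/-- distance from `pb` to `x` (clockwise) at time `t`. -/
def DD (t : ℕ) (x : P) : ℕ := (pos t x - pos t pb).val

/-- `Phi > 0` iff `pb ≻ x`. -/
def Phi (t : ℕ) (x : P) : ℤ := s t pb - s t x - (DD pos pb t x : ℤ)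

variable {pos s pb}

lemma DD_pos {t : ℕ} {x : P} (hx : x ≠ pb) : 0 < DD pos pb t x := by
  have : pos t x - pos t pb ≠ 0 := sub_ne_zero.mpr ((pos t).injective.ne hx)
  have := (ZMod.val_eq_zero (pos t x - pos t pb)).not.2 this
  unfold DD; omega

lemma DD_lt {t : ℕ} (x : P) : DD pos pb t x < n := ZMod.val_lt _

lemma peb_eq {t : ℕ} {x y : P} (h : DD pos pb t x = DD pos pb t y) : x = y := by
  have h2 : pos t x - pos t pb = pos t y - pos t pb := val_inj h
  have : pos t x = pos t y := by
    have := congrArg (fun z => z + pos t pb) h2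
    simpa [sub_add_cancel] using this
  exact (pos t).injective this

lemma pos_eq_of_DD {t : ℕ} {x y : P} (h : DD pos pb t x = DD pos pb t y) :
    pos t x = pos t y := by rw [peb_eq h]

lemma step_cases (he : Even n) (hn : 3 ≤ n) (hrun : OddEvenRun n pos s) (t : ℕ) (x : P) :
    (Active n (pos t) (s t) t (pos t x) ∧ pos (t+1) x = pos t x + 1 ∧ s (t+1) x = s t x - 1)
  ∨ (Active n (pos t) (s t) t (pos t x - 1) ∧ pos (t+1) x = pos t x - 1 ∧ s (t+1) x = s t x + 1)
  ∨ (¬ Active n (pos t) (s t) t (pos t x) ∧ ¬ Active n (pos t) (s t) t (pos t x - 1)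
      ∧ pos (t+1) x = pos t x ∧ s (t+1) x = s t x) := by
  obtain ⟨h1, h2, h3⟩ := hrun t x
  by_cases hA : Active n (pos t) (s t) t (pos t x)
  · by_cases hB : Active n (pos t) (s t) t (pos t x - 1)
    · exfalso
      have p1 := hA.1
      have p2 := hB.1
      have := parity_succ he hn (pos t x - 1)
      rw [sub_add_cancel] at this
      exact this (p1.trans p2.symm)
    · exact Or.inl ⟨hA, h1 hA⟩
  · by_cases hB : Active n (pos t) (s t) t (pos t x - 1)
    · exact Or.inr (Or.inl ⟨hB, h2 hB⟩)
    · exact Or.inr (Or.inr ⟨hA, hB, h3 hA hB⟩)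


lemma front_pos {t : ℕ} : pos t ((pos t).symm (pos t pb + 1)) = pos t pb + 1 :=
  (pos t).apply_symm_apply _

lemma front_ne (hn : 3 ≤ n) (t : ℕ) : (pos t).symm (pos t pb + 1) ≠ pb := by
  intro h
  have h2 : pos t pb + 1 = pos t pb :=
    (front_pos (pos := pos) (pb := pb) (t := t)).symm.trans (congrArg (pos t) h)
  have : (1 : ZMod n) = 0 := by
    have := congrArg (fun z => z - pos t pb) h2
    simpa using this
  exact one_ne_zero' hn this

/-- If `pb` advances at round `t`, full accounting for `pb` and the passed pebble. -/
lemma pass_front (he : Even n) (hn : 3 ≤ n) (hrun : OddEvenRun n pos s) (t : ℕ)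
    (hA : Active n (pos t) (s t) t (pos t pb)) :
    pos (t+1) pb = pos t pb + 1 ∧ s (t+1) pb = s t pb - 1 ∧
    pos (t+1) ((pos t).symm (pos t pb + 1)) = pos t pb ∧
    s (t+1) ((pos t).symm (pos t pb + 1)) = s t ((pos t).symm (pos t pb + 1)) + 1 ∧
    DD pos pb t ((pos t).symm (pos t pb + 1)) = 1 ∧
    DD pos pb (t+1) ((pos t).symm (pos t pb + 1)) = n - 1 ∧
    Phi pos s pb (t+1) ((pos t).symm (pos t pb + 1))
      = Phi pos s pb t ((pos t).symm (pos t pb + 1)) - n := by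
  set f := (pos t).symm (pos t pb + 1) with hf
  have hpf : pos t f = pos t pb + 1 := front_pos
  have hpb := (hrun t pb).1 hA
  have hAf : Active n (pos t) (s t) t (pos t f - 1) := by
    rw [hpf]; simpa using hA
  have hfmove := (hrun t f).2.1 hAf
  have hpf1 : pos (t+1) f = pos t pb := by rw [hfmove.1, hpf]; ring
  have hD1 : DD pos pb t f = 1 := by
    unfold DD; rw [hpf]
    have : pos t pb + 1 - pos t pb = (1 : ZMod n) := by ring
    rw [this, val_one' hn]
  have hDn : DD pos pb (t+1) f = n - 1 := by
    unfold DD; rw [hpf1, hpb.1]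
    have : pos t pb - (pos t pb + 1) = (-1 : ZMod n) := by ring
    rw [this, val_neg_one' hn]
  refine ⟨hpb.1, hpb.2, hpf1, hfmove.2, hD1, hDn, ?_⟩
  unfold Phi
  rw [hDn, hD1, hpb.2, hfmove.2]
  have hcast : ((n - 1 : ℕ) : ℤ) = (n : ℤ) - 1 := by
    have h1 : 1 ≤ n := by omega
    simpa using (Nat.cast_sub h1 : ((n - 1 : ℕ) : ℤ) = _)
  rw [hcast]
  ring

/-- x passing pb forces a very negative Phi. -/
lemma P2_Phi (hn : 3 ≤ n) {t : ℕ} {x : P}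
    (h : Active n (pos t) (s t) t (pos t x) ∧ pos t pb = pos t x + 1) :
    Phi pos s pb t x ≤ -(n:ℤ) := by
  obtain ⟨hA, hpos⟩ := h
  have hD : DD pos pb t x = n - 1 := by
    unfold DD; rw [hpos]
    have : pos t x - (pos t x + 1) = (-1 : ZMod n) := by ring
    rw [this, val_neg_one' hn]
  have hs : s t x - s t pb > 1 := by
    have := hA.2
    rw [Equiv.symm_apply_apply, ← hpos, Equiv.symm_apply_apply] at this
    exact this
  unfold Phi
  rw [hD]
  have hcast : ((n - 1 : ℕ) : ℤ) = (n : ℤ) - 1 := by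
    have h1 : 1 ≤ n := by omega
    simpa using (Nat.cast_sub h1 : ((n - 1 : ℕ) : ℤ) = _)
  rw [hcast]
  linarith

/-- Distance bookkeeping for a non-crossing pair. -/
lemma step_D (he : Even n) (hn : 3 ≤ n) (hrun : OddEvenRun n pos s) (t : ℕ) {x : P}
    (hx : x ≠ pb)
    (hP1 : ¬ (Active n (pos t) (s t) t (pos t pb) ∧ pos t x = pos t pb + 1))
    (hP2 : ¬ (Active n (pos t) (s t) t (pos t x) ∧ pos t pb = pos t x + 1)) :
    (DD pos pb (t+1) x : ℤ)
      = (DD pos pb t x : ℤ) + (s t x - s (t+1) x) - (s t pb - s (t+1) pb) := by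
  have hw0 : pos t x - pos t pb ≠ 0 := sub_ne_zero.mpr ((pos t).injective.ne hx)
  have hw0' : pos (t+1) x - pos (t+1) pb ≠ 0 :=
    sub_ne_zero.mpr ((pos (t+1)).injective.ne hx)
  unfold DD
  set w := pos t x - pos t pb with hwdef
  have hvpos : 1 ≤ w.val := Nat.one_le_iff_ne_zero.2 (fun hc => hw0 ((ZMod.val_eq_zero w).1 hc))
  rcases step_cases he hn hrun t pb with ⟨hAp, hpp, hsp⟩ | ⟨hAp, hpp, hsp⟩ | ⟨hAp1, hAp2, hpp, hsp⟩ <;>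
    rcases step_cases he hn hrun t x with ⟨hAx, hpx, hsx⟩ | ⟨hAx, hpx, hsx⟩ | ⟨hAx1, hAx2, hpx, hsx⟩
  · -- pb advance, x advance : c = 0
    have hv : pos (t+1) x - pos (t+1) pb = w := by rw [hpx, hpp, hwdef]; try ring
    rw [hv, hsx, hsp]; omega
  · -- pb advance, x retreat : c = -2
    have h1 : w - 1 ≠ 0 := by
      intro hc
      apply hP1
      refine ⟨hAp, ?_⟩
      have hw1 : w = 1 := by rwa [sub_eq_zero] at hc
      have h3 : pos t x = 1 + pos t pb := sub_eq_iff_eq_add.mp (hwdef ▸ hw1)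
      rw [h3, add_comm]
    have hv : pos (t+1) x - pos (t+1) pb = w - 1 - 1 := by rw [hpx, hpp, hwdef]; try ring
    have e1 : (w - 1).val = w.val - 1 := val_sub_one hw0
    have e0 : 1 ≤ (w - 1).val := Nat.one_le_iff_ne_zero.2 (fun hc => h1 ((ZMod.val_eq_zero _).1 hc))
    have e2 : (w - 1 - 1).val = (w - 1).val - 1 := val_sub_one h1
    rw [hv, hsx, hsp, e2, e1]; omega
  · -- pb advance, x stall : c = -1
    have hv : pos (t+1) x - pos (t+1) pb = w - 1 := by rw [hpx, hpp, hwdef]; try ring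
    have e1 : (w - 1).val = w.val - 1 := val_sub_one hw0
    rw [hv, hsx, hsp, e1]; omega
  · -- pb retreat, x advance : c = +2
    have h1 : w + 1 ≠ 0 := by
      intro hc
      apply hP2
      refine ⟨hAx, ?_⟩
      have hw1 : w = -1 := eq_neg_of_add_eq_zero_left hc
      have h3 : pos t x = -1 + pos t pb := sub_eq_iff_eq_add.mp (hwdef ▸ hw1)
      rw [h3]; ring
    have hv : pos (t+1) x - pos (t+1) pb = w + 1 + 1 := by rw [hpx, hpp, hwdef]; try ring
    have h2 : w + 1 + 1 ≠ 0 := by rw [← hv]; exact hw0'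
    have e1 : (w + 1).val = w.val + 1 := val_add_one h1
    have e2 : (w + 1 + 1).val = (w + 1).val + 1 := val_add_one h2
    rw [hv, hsx, hsp, e2, e1]; omega
  · -- pb retreat, x retreat : c = 0
    have hv : pos (t+1) x - pos (t+1) pb = w := by rw [hpx, hpp, hwdef]; try ring
    rw [hv, hsx, hsp]; omega
  · -- pb retreat, x stall : c = +1
    have hv : pos (t+1) x - pos (t+1) pb = w + 1 := by rw [hpx, hpp, hwdef]; try ring
    have h1 : w + 1 ≠ 0 := by rw [← hv]; exact hw0'
    have e1 : (w + 1).val = w.val + 1 := val_add_one h1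
    rw [hv, hsx, hsp, e1]; omega
  · -- pb stall, x advance : c = +1
    have hv : pos (t+1) x - pos (t+1) pb = w + 1 := by rw [hpx, hpp, hwdef]; try ring
    have h1 : w + 1 ≠ 0 := by rw [← hv]; exact hw0'
    have e1 : (w + 1).val = w.val + 1 := val_add_one h1
    rw [hv, hsx, hsp, e1]; omega
  · -- pb stall, x retreat : c = -1
    have hv : pos (t+1) x - pos (t+1) pb = w - 1 := by rw [hpx, hpp, hwdef]; try ring
    have e1 : (w - 1).val = w.val - 1 := val_sub_one hw0
    rw [hv, hsx, hsp, e1]; omega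
  · -- pb stall, x stall : c = 0
    have hv : pos (t+1) x - pos (t+1) pb = w := by rw [hpx, hpp, hwdef]; try ring
    rw [hv, hsx, hsp]; omega

lemma step_Phi (he : Even n) (hn : 3 ≤ n) (hrun : OddEvenRun n pos s) (t : ℕ) {x : P}
    (hx : x ≠ pb)
    (hP1 : ¬ (Active n (pos t) (s t) t (pos t pb) ∧ pos t x = pos t pb + 1))
    (hP2 : ¬ (Active n (pos t) (s t) t (pos t x) ∧ pos t pb = pos t x + 1)) :
    Phi pos s pb (t+1) x = Phi pos s pb t x := by
  have hD := step_D he hn hrun t hx hP1 hP2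
  unfold Phi
  rw [hD]
  ring


lemma mu_bound (he : Even n) (hn : 3 ≤ n) (hrun : OddEvenRun n pos s) (t : ℕ) (y : P) :
    s t y - 1 ≤ s (t+1) y ∧ s (t+1) y ≤ s t y + 1 := by
  rcases step_cases he hn hrun t y with ⟨_, _, h⟩ | ⟨_, _, h⟩ | ⟨_, _, _, h⟩ <;> rw [h] <;> omega

lemma Phi_def (t : ℕ) (x : P) :
    Phi pos s pb t x = s t pb - s t x - (DD pos pb t x : ℤ) := rfl

/-- Base of the phase-1 invariant: at time 0 any pebble strictly between two
members of `Q` is itself a member of `Q`, hence dominated. -/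
lemma seg_base (hn : 3 ≤ n) {Q : Finset P} (hpQ : pb ∉ Q)
    (hseg : ∃ v₀ : ZMod n, ∀ q ∈ Q, ∃ i : ℕ, i < Q.card ∧ pos 0 q = v₀ + i)
    (hbig : ∀ q ∈ Q, 0 < Phi pos s pb 0 q) :
    ∀ x : P, x ≠ pb → ∀ u ∈ Q, ∀ u' ∈ Q,
      DD pos pb 0 u < DD pos pb 0 x → DD pos pb 0 x < DD pos pb 0 u' →
      0 < Phi pos s pb 0 x := by
  classical
  obtain ⟨v₀, hv⟩ := hseg
  set k := Q.card with hk
  -- occupancy: every vertex v₀ + i, i < k, carries a Q pebble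
  have occupant : ∀ i : ℕ, i < k → ∃ q ∈ Q, pos 0 q = v₀ + i := by
    intro i hi
    set S := Q.image (pos 0) with hS
    set T := (Finset.range k).image (fun j : ℕ => v₀ + (j : ZMod n)) with hT
    have hST : S ⊆ T := by
      intro v hvS
      obtain ⟨q, hq, rfl⟩ := Finset.mem_image.1 hvS
      obtain ⟨j, hj, hj2⟩ := hv q hq
      exact Finset.mem_image.2 ⟨j, Finset.mem_range.2 hj, hj2.symm⟩
    have hScard : S.card = k := Finset.card_image_of_injective Q (pos 0).injective
    have hTcard : T.card ≤ k := le_trans Finset.card_image_le (le_of_eq (Finset.card_range k))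
    have hSeqT : S = T := Finset.eq_of_subset_of_card_le hST (by rw [hScard]; exact hTcard)
    have hmem : v₀ + (i : ZMod n) ∈ T :=
      Finset.mem_image.2 ⟨i, Finset.mem_range.2 hi, rfl⟩
    rw [← hSeqT] at hmem
    obtain ⟨q, hq, hq2⟩ := Finset.mem_image.1 hmem
    exact ⟨q, hq, hq2⟩
  -- distances along the segment are contiguous
  have F3 : ∀ i : ℕ, i < k → (v₀ + (i : ZMod n) - pos 0 pb).val = (v₀ - pos 0 pb).val + i := by
    intro i
    induction i with
    | zero => intro _; simp
    | succ i ihi =>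
      intro hik
      have prev := ihi (by omega)
      have hne : (v₀ + (i : ZMod n) - pos 0 pb) + 1 ≠ 0 := by
        obtain ⟨q, hq, hq2⟩ := occupant (i+1) hik
        intro hc
        have h3 : v₀ + (i : ZMod n) + 1 = pos 0 pb := by
          have hc' : (v₀ + (i : ZMod n) + 1) - pos 0 pb = 0 := by linear_combination hc
          exact sub_eq_zero.1 hc'
        have h4 : pos 0 q = pos 0 pb := by
          rw [hq2]; push_cast; linear_combination h3
        exact hpQ ((pos 0).injective h4 ▸ hq)
      have heq : v₀ + ((i+1 : ℕ) : ZMod n) - pos 0 pb = (v₀ + (i : ZMod n) - pos 0 pb) + 1 := by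
        push_cast; ring
      rw [heq, val_add_one hne, prev]
      omega
  intro x hx u hu u' hu' h1 h2
  obtain ⟨iu, hiu, hpu⟩ := hv u hu
  obtain ⟨iu', hiu', hpu'⟩ := hv u' hu'
  have hDu : DD pos pb 0 u = (v₀ - pos 0 pb).val + iu := by
    unfold DD; rw [hpu]; exact F3 iu hiu
  have hDu' : DD pos pb 0 u' = (v₀ - pos 0 pb).val + iu' := by
    unfold DD; rw [hpu']; exact F3 iu' hiu'
  set w₀ := (v₀ - pos 0 pb).val
  set m := DD pos pb 0 x - w₀ with hm
  have hmlt : m < k := by omega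
  obtain ⟨qm, hqm, hqm2⟩ := occupant m hmlt
  have hDqm : DD pos pb 0 qm = w₀ + m := by
    unfold DD; rw [hqm2]; exact F3 m hmlt
  have : DD pos pb 0 x = DD pos pb 0 qm := by omega
  have hxq : x = qm := peb_eq this
  exact hbig x (hxq ▸ hqm)


/-- Phase 1: up to round `t₀`, the `Q`-disbursements are unchanged and the
interval invariant holds. -/
lemma phase1 (he : Even n) (hn : 3 ≤ n) (hrun : OddEvenRun n pos s)
    {Q : Finset P} (hpQ : pb ∉ Q)
    (hseg : ∃ v₀ : ZMod n, ∀ q ∈ Q, ∃ i : ℕ, i < Q.card ∧ pos 0 q = v₀ + i)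
    (hbig : ∀ q ∈ Q, 0 < Phi pos s pb 0 q)
    (t₀ : ℕ)
    (hfirst : ∀ t < t₀, ¬ (pos (t + 1) pb = pos t pb + 1 ∧ (pos t).symm (pos t pb + 1) ∈ Q)) :
    ∀ t, t ≤ t₀ →
      (∀ q ∈ Q, Phi pos s pb t q = Phi pos s pb 0 q) ∧
      (∀ x : P, x ≠ pb → ∀ u ∈ Q, ∀ u' ∈ Q,
        DD pos pb t u < DD pos pb t x → DD pos pb t x < DD pos pb t u' →
        (0 < Phi pos s pb t x ∨ (pos t x).val % 2 = t % 2)) := by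
  intro t
  induction t with
  | zero =>
    intro _
    exact ⟨fun q _ => rfl,
      fun x hx u hu u' hu' h1 h2 => Or.inl (seg_base hn hpQ hseg hbig x hx u hu u' hu' h1 h2)⟩
  | succ t ih =>
    intro ht
    have htlt : t < t₀ := ht
    obtain ⟨ihQ, ihI⟩ := ih (le_of_lt htlt)
    have hQne : ∀ q ∈ Q, q ≠ pb := fun q hq h => hpQ (h ▸ hq)
    have hQP1 : ∀ q ∈ Q, ¬ (Active n (pos t) (s t) t (pos t pb) ∧ pos t q = pos t pb + 1) := by
      rintro q hq ⟨hA, hposq⟩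
      have hadv := (hrun t pb).1 hA
      refine hfirst t htlt ⟨hadv.1, ?_⟩
      have : (pos t).symm (pos t pb + 1) = q := by
        rw [Equiv.symm_apply_eq]; exact hposq.symm
      rw [this]; exact hq
    have hQP2 : ∀ q ∈ Q, ¬ (Active n (pos t) (s t) t (pos t q) ∧ pos t pb = pos t q + 1) := by
      intro q hq hP2
      have hneg := P2_Phi hn (pb := pb) hP2
      have h0 : 0 < Phi pos s pb t q := by rw [ihQ q hq]; exact hbig q hq
      have hn0 : (0:ℤ) < n := by exact_mod_cast (by omega : 0 < n)
      linarith
    have hQstep : ∀ q ∈ Q, Phi pos s pb (t+1) q = Phi pos s pb 0 q := fun q hq =>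
      (step_Phi he hn hrun t (hQne q hq) (hQP1 q hq) (hQP2 q hq)).trans (ihQ q hq)
    refine ⟨hQstep, ?_⟩
    intro x hx u hu u' hu' h1 h2
    have hune : u ≠ pb := hQne u hu
    have hu'ne : u' ≠ pb := hQne u' hu'
    by_cases hP1x : Active n (pos t) (s t) t (pos t pb) ∧ pos t x = pos t pb + 1
    · -- pb passes x: x lands at distance n-1, contradicting h2
      exfalso
      have hfeq : (pos t).symm (pos t pb + 1) = x := by
        rw [Equiv.symm_apply_eq]; exact hP1x.2.symm
      have hp := pass_front he hn hrun t hP1x.1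
      rw [hfeq] at hp
      have hDx1 : DD pos pb (t+1) x = n - 1 := hp.2.2.2.2.2.1
      have := DD_lt (pos := pos) (pb := pb) (t := t+1) u'
      omega
    by_cases hP2x : Active n (pos t) (s t) t (pos t x) ∧ pos t pb = pos t x + 1
    · -- x passes pb: x lands at distance 1, contradicting h1
      exfalso
      have hxadv := (hrun t x).1 hP2x.1
      have hApb : Active n (pos t) (s t) t (pos t pb - 1) := by
        have : pos t pb - 1 = pos t x := by rw [hP2x.2]; ring
        rw [this]; exact hP2x.1
      have hpbret := (hrun t pb).2.1 hApb
      have hDx1 : DD pos pb (t+1) x = 1 := by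
        unfold DD
        rw [hxadv.1, hpbret.1, hP2x.2]
        have : pos t x + 1 - (pos t x + 1 - 1) = (1 : ZMod n) := by ring
        rw [this, val_one' hn]
      have := DD_pos (pos := pos) (pb := pb) (t := t+1) hune
      omega
    -- non-crossing case
    have hDx := step_D he hn hrun t hx hP1x hP2x
    have hDu := step_D he hn hrun t hune (hQP1 u hu) (hQP2 u hu)
    have hDu' := step_D he hn hrun t hu'ne (hQP1 u' hu') (hQP2 u' hu')
    have hmu := mu_bound he hn hrun t u
    have hmu' := mu_bound he hn hrun t u'
    have h1' : (DD pos pb (t+1) u : ℤ) < (DD pos pb (t+1) x : ℤ) := by exact_mod_cast h1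
    have h2' : (DD pos pb (t+1) x : ℤ) < (DD pos pb (t+1) u' : ℤ) := by exact_mod_cast h2
    have hPhix : Phi pos s pb (t+1) x = Phi pos s pb t x :=
      step_Phi he hn hrun t hx hP1x hP2x
    have hxposne : pos t x ≠ pos t pb := (pos t).injective.ne hx
    rcases step_cases he hn hrun t x with ⟨hAx, hpx, hsx⟩ | ⟨hAx, hpx, hsx⟩ | ⟨hAx1, hAx2, hpx, hsx⟩
    · -- x advances: parity flips correctly
      right
      have hpar := hAx.1
      have hflip := parity_succ he hn (pos t x)
      rw [hpx]
      omega
    · -- x retreats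
      have hDxval : (DD pos pb (t+1) x : ℤ) = (DD pos pb t x : ℤ) - 1 - (s t pb - s (t+1) pb) := by
        rw [hDx, hsx]; ring
      have hlow : DD pos pb t u < DD pos pb t x := by
        rw [hDxval, hDu] at h1'; omega
      have hupp : DD pos pb t x ≤ DD pos pb t u' + 1 := by
        rw [hDxval, hDu'] at h2'; omega
      -- the pebble that passed x
      have hyne : pos t x - 1 ≠ pos t pb := by
        intro hc
        apply hP1x
        constructor
        · have : pos t x - 1 = pos t pb := hc
          rw [← this]; exact hAx
        · rw [← hc]; ring
      set y := (pos t).symm (pos t x - 1) with hy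
      have hpy : pos t y = pos t x - 1 := (pos t).apply_symm_apply _
      have hyne' : y ≠ pb := by
        intro hc
        apply hyne
        rw [← hpy, hc]
      have hDy : DD pos pb t y = DD pos pb t x - 1 := by
        unfold DD
        rw [hpy]
        have : pos t x - 1 - pos t pb = (pos t x - pos t pb) - 1 := by ring
        rw [this, val_sub_one (sub_ne_zero.mpr hxposne)]
      have hDypos := DD_pos (pos := pos) (pb := pb) (t := t) hyne'
      have hswp : s t y - s t x > 1 := by
        have := hAx.2
        rw [hy] at *
        have h3 : (pos t x - 1) + 1 = pos t x := by ring
        rw [h3, Equiv.symm_apply_apply] at this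
        exact this
      rcases Nat.lt_or_ge (DD pos pb t x) (DD pos pb t u' + 1) with hcase | hcase
      · -- D x ≤ D u'
        rcases Nat.eq_or_lt_of_le (by omega : DD pos pb t x ≤ DD pos pb t u') with heq | hlt
        · -- x = u'
          have : x = u' := peb_eq heq
          left
          rw [hPhix, this, ihQ u' hu']
          exact hbig u' hu'
        · rcases ihI x hx u hu u' hu' hlow hlt with hdom | hpar
          · left; rw [hPhix]; exact hdom
          · exfalso
            have hpar2 := hAx.1
            have hflip := parity_succ he hn (pos t x - 1)
            rw [sub_add_cancel] at hflip
            omega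
      · -- D x = D u' + 1, the passer is u'
        have hDyu : DD pos pb t y = DD pos pb t u' := by omega
        have hyu : y = u' := peb_eq hDyu
        left
        rw [hPhix]
        have hPu' : 0 < Phi pos s pb t u' := by rw [ihQ u' hu']; exact hbig u' hu'
        rw [Phi_def] at hPu' ⊢
        rw [hyu] at hswp
        have hDD : (DD pos pb t x : ℤ) = (DD pos pb t u' : ℤ) + 1 := by omega
        rw [hDD]
        linarith
    · -- x stalls
      have hDxval : (DD pos pb (t+1) x : ℤ) = (DD pos pb t x : ℤ) - (s t pb - s (t+1) pb) := by
        rw [hDx, hsx]; ring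
      have hlow : DD pos pb t u ≤ DD pos pb t x := by
        rw [hDxval, hDu] at h1'; omega
      have hupp : DD pos pb t x ≤ DD pos pb t u' := by
        rw [hDxval, hDu'] at h2'; omega
      rcases Nat.eq_or_lt_of_le hlow with heq | hlow'
      · -- x = u
        have : u = x := peb_eq heq
        left
        rw [hPhix, ← this, ihQ u hu]
        exact hbig u hu
      rcases Nat.eq_or_lt_of_le hupp with heq | hupp'
      · -- x = u'
        have : x = u' := peb_eq heq
        left
        rw [hPhix, this, ihQ u' hu']
        exact hbig u' hu'
      rcases ihI x hx u hu u' hu' hlow' hupp' with hdom | hpar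
      · left; rw [hPhix]; exact hdom
      by_cases hdomx : 0 < Phi pos s pb t x
      · left; rw [hPhix]; exact hdomx
      exfalso
      have hzne : pos t x + 1 ≠ pos t pb := by
        intro hc
        have h5 : pos t x - pos t pb = -1 := by rw [← hc]; ring
        have hDxn : DD pos pb t x = n - 1 := by
          unfold DD; rw [h5, val_neg_one' hn]
        have := DD_lt (pos := pos) (pb := pb) (t := t) u'
        omega
      set z := (pos t).symm (pos t x + 1) with hz
      have hpz : pos t z = pos t x + 1 := (pos t).apply_symm_apply _
      have hzne' : z ≠ pb := by intro hc; apply hzne; rw [← hpz, hc]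
      have hDz : DD pos pb t z = DD pos pb t x + 1 := by
        unfold DD
        rw [hpz]
        have h3 : pos t x + 1 - pos t pb = (pos t x - pos t pb) + 1 := by ring
        rw [h3, val_add_one (by rw [← h3]; rw [← hpz]; exact sub_ne_zero.mpr ((pos t).injective.ne hzne'))]
      have hdomz : 0 < Phi pos s pb t z := by
        rcases Nat.eq_or_lt_of_le (by omega : DD pos pb t z ≤ DD pos pb t u') with heqz | hltz
        · have h6 : z = u' := peb_eq heqz
          rw [h6, ihQ u' hu']; exact hbig u' hu'
        · rcases ihI z hzne' u hu u' hu' (by omega) hltz with hdz | hpz2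
          · exact hdz
          · exfalso
            have hflip := parity_succ he hn (pos t x)
            rw [← hpz] at hflip
            omega
      push_neg at hdomx
      rw [Phi_def] at hdomx hdomz
      rw [hDz] at hdomz
      have hswap : s t x - s t z > 1 := by push_cast at hdomz hdomx ⊢; omega
      have hActx : Active n (pos t) (s t) t (pos t x) := by
        refine ⟨hpar, ?_⟩
        rw [Equiv.symm_apply_apply, ← hz]
        exact hswap
      exact hAx1 hActx


/-- From the bundle data, `pb` advances. -/
lemma adv_of_bundle (he : Even n) (hn : 3 ≤ n) (hrun : OddEvenRun n pos s)
    {Q : Finset P} (hpQ : pb ∉ Q) (t : ℕ)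
    (hpar : (pos t pb).val % 2 = t % 2)
    (hEx : ∃ u ∈ Q, 0 < Phi pos s pb t u)
    (hinv : ∀ x : P, x ≠ pb → ∀ u ∈ Q, 0 < Phi pos s pb t u →
      DD pos pb t x < DD pos pb t u →
      (0 < Phi pos s pb t x ∨ (pos t x).val % 2 = t % 2)) :
    Active n (pos t) (s t) t (pos t pb) := by
  obtain ⟨u, hu, hdomu⟩ := hEx
  have hune : u ≠ pb := fun h => hpQ (by rw [← h]; exact hu)
  set f := (pos t).symm (pos t pb + 1) with hf
  have hpf : pos t f = pos t pb + 1 := (pos t).apply_symm_apply _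
  have hfne : f ≠ pb := front_ne hn t
  have hDf : DD pos pb t f = 1 := by
    unfold DD
    rw [hpf]
    have : pos t pb + 1 - pos t pb = (1 : ZMod n) := by ring
    rw [this, val_one' hn]
  have hdomf : 0 < Phi pos s pb t f := by
    have hDupos : 0 < DD pos pb t u := DD_pos hune
    by_cases hDu1 : DD pos pb t u = 1
    · have h7 : u = f := peb_eq (pos := pos) (pb := pb) (t := t)
        (show DD pos pb t u = DD pos pb t f by omega)
      rw [← h7]; exact hdomu
    · rcases hinv f hfne u hu hdomu (by omega) with hd | hp
      · exact hd
      · exfalso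
        have hflip := parity_succ he hn (pos t pb)
        rw [← hpf] at hflip
        omega
  refine ⟨hpar, ?_⟩
  rw [Equiv.symm_apply_apply, ← hf]
  rw [Phi_def, hDf] at hdomf
  push_cast at hdomf
  omega

/-- Phase 2: from round `t₀` on, `pb` keeps swapping forward. -/
lemma phase2 (he : Even n) (hn : 3 ≤ n) (hrun : OddEvenRun n pos s)
    {Q : Finset P} [DecidableEq P] (hpQ : pb ∉ Q) (t₀ : ℕ)
    (hQbig : ∀ q ∈ Q, 0 < Phi pos s pb t₀ q)
    (hQbound : ∀ q ∈ Q, Phi pos s pb t₀ q ≤ (n:ℤ) - 1)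
    (hpar0 : (pos t₀ pb).val % 2 = t₀ % 2)
    (hINV : ∀ x : P, x ≠ pb → ∀ u ∈ Q, 0 < Phi pos s pb t₀ u →
      DD pos pb t₀ x < DD pos pb t₀ u →
      (0 < Phi pos s pb t₀ x ∨ (pos t₀ x).val % 2 = t₀ % 2)) :
    ∀ j, j ≤ Q.card - 1 →
      ((pos (t₀+j) pb).val % 2 = (t₀+j) % 2) ∧
      (∀ q ∈ Q, Phi pos s pb (t₀+j) q = Phi pos s pb t₀ q ∨
        Phi pos s pb (t₀+j) q = Phi pos s pb t₀ q - n) ∧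
      ((Q.filter (fun q => ¬ (0 < Phi pos s pb (t₀+j) q))).card ≤ j) ∧
      (∀ x : P, x ≠ pb → ∀ u ∈ Q, 0 < Phi pos s pb (t₀+j) u →
        DD pos pb (t₀+j) x < DD pos pb (t₀+j) u →
        (0 < Phi pos s pb (t₀+j) x ∨ (pos (t₀+j) x).val % 2 = (t₀+j) % 2)) := by
  intro j
  induction j with
  | zero =>
    intro _
    refine ⟨hpar0, fun q hq => Or.inl rfl, ?_, hINV⟩
    have : Q.filter (fun q => ¬ (0 < Phi pos s pb (t₀+0) q)) = ∅ := by
      apply Finset.filter_false_of_mem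
      intro q hq
      simp only [not_not]
      exact hQbig q hq
    rw [this]
    simp
  | succ j ihj =>
    intro hj
    obtain ⟨ihpar, ihtrack, ihcard, ihinv⟩ := ihj (by omega)
    set t := t₀ + j with htdef
    have hkpos : 0 < Q.card := by
      by_contra h
      push_neg at h
      interval_cases hc : Q.card
      omega
    -- pb advances at round t
    have hEx : ∃ u ∈ Q, 0 < Phi pos s pb t u := by
      by_contra h
      push_neg at h
      have : Q.filter (fun q => ¬ (0 < Phi pos s pb t q)) = Q :=
        Finset.filter_true_of_mem (fun q hq => not_lt.2 (h q hq))
      rw [this] at ihcard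
      omega
    have hAt : Active n (pos t) (s t) t (pos t pb) :=
      adv_of_bundle he hn hrun hpQ t ihpar hEx ihinv
    have hp := pass_front he hn hrun t hAt
    set f := (pos t).symm (pos t pb + 1) with hf
    have hpf : pos t f = pos t pb + 1 := (pos t).apply_symm_apply _
    have hfne : f ≠ pb := front_ne hn t
    -- parity at t+1
    have hpar' : (pos (t+1) pb).val % 2 = (t+1) % 2 := by
      rw [hp.1]
      have hflip := parity_succ he hn (pos t pb)
      omega
    -- non-crossing facts for members of Q that are not the front pebble
    have hQnc : ∀ q ∈ Q, q ≠ f →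
        (¬ (Active n (pos t) (s t) t (pos t pb) ∧ pos t q = pos t pb + 1)) ∧
        (¬ (Active n (pos t) (s t) t (pos t q) ∧ pos t pb = pos t q + 1)) := by
      intro q hq hqf
      constructor
      · rintro ⟨_, hposq⟩
        exact hqf ((pos t).injective (by rw [hposq, hpf]))
      · intro hP2
        have hneg := P2_Phi hn (pb := pb) hP2
        rcases ihtrack q hq with h | h
        · have := hQbig q hq; rw [h] at hneg; omega
        · have h1 := hQbig q hq
          have h2 : (1:ℤ) ≤ Phi pos s pb t₀ q := h1
          rw [h] at hneg
          omega
    -- tracking at t+1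
    have htrack' : ∀ q ∈ Q, Phi pos s pb (t+1) q = Phi pos s pb t₀ q ∨
        Phi pos s pb (t+1) q = Phi pos s pb t₀ q - n := by
      intro q hq
      by_cases hqf : q = f
      · -- q is passed this round
        have hfQ : f ∈ Q := by rw [← hqf]; exact hq
        rw [hqf]
        have hPhi' : Phi pos s pb (t+1) f = Phi pos s pb t f - n := hp.2.2.2.2.2.2
        rcases ihtrack f hfQ with h | h
        · right; rw [hPhi', h]
        · -- q already passed: but then it could not be the active front
          exfalso
          have hD1 : DD pos pb t f = 1 := hp.2.2.2.2.1
          have hb := hQbound f hfQ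
          have hs2 : s t pb - s t f > 1 := by
            have := hAt.2
            rw [Equiv.symm_apply_apply, ← hf] at this
            exact this
          have h9 : Phi pos s pb t f > 0 := by
            rw [Phi_def, hD1]
            push_cast
            omega
          rw [h] at h9
          omega
      · have hq' := hQnc q hq hqf
        have := step_Phi he hn hrun t (fun h => hpQ (by rw [← h]; exact hq)) hq'.1 hq'.2
        rw [this]
        exact ihtrack q hq
    -- card bound at t+1
    have hcard' : (Q.filter (fun q => ¬ (0 < Phi pos s pb (t+1) q))).card ≤ j + 1 := by
      have hsub : Q.filter (fun q => ¬ (0 < Phi pos s pb (t+1) q)) ⊆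
          insert f (Q.filter (fun q => ¬ (0 < Phi pos s pb t q))) := by
        intro q hq'
        obtain ⟨hqQ, hnd⟩ := Finset.mem_filter.1 hq'
        by_cases hqf : q = f
        · exact Finset.mem_insert.2 (Or.inl hqf)
        · have hnc := hQnc q hqQ hqf
          have := step_Phi he hn hrun t (fun h => hpQ (by rw [← h]; exact hqQ)) hnc.1 hnc.2
          rw [this] at hnd
          exact Finset.mem_insert.2 (Or.inr (Finset.mem_filter.2 ⟨hqQ, hnd⟩))
      calc (Q.filter (fun q => ¬ (0 < Phi pos s pb (t+1) q))).card
          ≤ (insert f (Q.filter (fun q => ¬ (0 < Phi pos s pb t q)))).card :=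
            Finset.card_le_card hsub
        _ ≤ (Q.filter (fun q => ¬ (0 < Phi pos s pb t q))).card + 1 :=
            Finset.card_insert_le _ _
        _ ≤ j + 1 := by omega
    refine ⟨by rw [show t₀ + (j+1) = t + 1 by omega]; exact hpar',
      by rw [show t₀ + (j+1) = t + 1 by omega]; exact htrack',
      by rw [show t₀ + (j+1) = t + 1 by omega]; exact hcard', ?_⟩
    rw [show t₀ + (j+1) = t + 1 by omega]
    -- the interval invariant at t+1
    intro x hx u' hu'Q hdomu' h2
    have hu'ne : u' ≠ pb := fun h => hpQ (by rw [← h]; exact hu'Q)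
    -- u' is not passed this round, and does not cross pb
    have hu'f : u' ≠ f := by
      intro hc
      have hPhi' : Phi pos s pb (t+1) u' = Phi pos s pb t u' - n := by
        rw [hc]; exact hp.2.2.2.2.2.2
      rcases ihtrack u' hu'Q with h | h
      · have hb := hQbound u' hu'Q
        rw [hPhi', h] at hdomu'
        omega
      · have hb := hQbound u' hu'Q
        have h1 := hQbig u' hu'Q
        rw [hPhi', h] at hdomu'
        omega
    have hu'nc := hQnc u' hu'Q hu'f
    have hDu' := step_D he hn hrun t hu'ne hu'nc.1 hu'nc.2
    have hPhiu' : Phi pos s pb (t+1) u' = Phi pos s pb t u' :=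
      step_Phi he hn hrun t hu'ne hu'nc.1 hu'nc.2
    have hdomu't : 0 < Phi pos s pb t u' := by rw [← hPhiu']; exact hdomu'
    have hmu' := mu_bound he hn hrun t u'
    have hspb : s (t+1) pb = s t pb - 1 := hp.2.1
    -- x crossing cases
    by_cases hP1x : Active n (pos t) (s t) t (pos t pb) ∧ pos t x = pos t pb + 1
    · exfalso
      have hfeq : f = x := by rw [hf, Equiv.symm_apply_eq]; exact hP1x.2.symm
      have hDx1 : DD pos pb (t+1) x = n - 1 := by rw [← hfeq]; exact hp.2.2.2.2.2.1
      have := DD_lt (pos := pos) (pb := pb) (t := t+1) u'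
      omega
    by_cases hP2x : Active n (pos t) (s t) t (pos t x) ∧ pos t pb = pos t x + 1
    · exfalso
      have hparx := hP2x.1.1
      have hflip := parity_succ he hn (pos t x)
      rw [← hP2x.2] at hflip
      omega
    have hDx := step_D he hn hrun t hx hP1x hP2x
    have hPhix : Phi pos s pb (t+1) x = Phi pos s pb t x :=
      step_Phi he hn hrun t hx hP1x hP2x
    have hxposne : pos t x ≠ pos t pb := (pos t).injective.ne hx
    have h2' : (DD pos pb (t+1) x : ℤ) < (DD pos pb (t+1) u' : ℤ) := by exact_mod_cast h2
    rcases step_cases he hn hrun t x with ⟨hAx, hpx, hsx⟩ | ⟨hAx, hpx, hsx⟩ | ⟨hAx1, hAx2, hpx, hsx⟩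
    · -- x advances
      right
      have hparx := hAx.1
      have hflip := parity_succ he hn (pos t x)
      rw [hpx]
      omega
    · -- x retreats
      have hupp : DD pos pb t x ≤ DD pos pb t u' + 1 := by
        rw [hDx, hDu'] at h2'
        rw [hsx, hspb] at h2'
        omega
      have hyne : pos t x - 1 ≠ pos t pb := by
        intro hc
        apply hP1x
        constructor
        · exact hAt
        · rw [← hc]; ring
      set y := (pos t).symm (pos t x - 1) with hy
      have hpy : pos t y = pos t x - 1 := (pos t).apply_symm_apply _
      have hyne' : y ≠ pb := by intro hc; apply hyne; rw [← hpy, hc]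
      have hDy : DD pos pb t y = DD pos pb t x - 1 := by
        unfold DD
        rw [hpy]
        have h3 : pos t x - 1 - pos t pb = (pos t x - pos t pb) - 1 := by ring
        rw [h3, val_sub_one (sub_ne_zero.mpr hxposne)]
      have hswp : s t y - s t x > 1 := by
        have := hAx.2
        have h3 : (pos t x - 1) + 1 = pos t x := by ring
        rw [h3, Equiv.symm_apply_apply, ← hy] at this
        exact this
      rcases Nat.lt_or_ge (DD pos pb t x) (DD pos pb t u' + 1) with hcase | hcase
      · rcases Nat.eq_or_lt_of_le (by omega : DD pos pb t x ≤ DD pos pb t u') with heq | hlt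
        · have : x = u' := peb_eq heq
          left
          rw [hPhix, this]
          exact hdomu't
        · rcases ihinv x hx u' hu'Q hdomu't hlt with hdom | hpar
          · left; rw [hPhix]; exact hdom
          · exfalso
            have hpar2 := hAx.1
            have hflip := parity_succ he hn (pos t x - 1)
            rw [sub_add_cancel] at hflip
            omega
      · have hDyu : DD pos pb t y = DD pos pb t u' := by omega
        have hyu : y = u' := peb_eq hDyu
        left
        rw [hPhix]
        rw [Phi_def] at hdomu't ⊢
        rw [hyu] at hswp
        have hDD : (DD pos pb t x : ℤ) = (DD pos pb t u' : ℤ) + 1 := by omega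
        rw [hDD]
        linarith
    · -- x stalls
      have hupp : DD pos pb t x ≤ DD pos pb t u' := by
        rw [hDx, hDu'] at h2'
        rw [hsx, hspb] at h2'
        omega
      rcases Nat.eq_or_lt_of_le hupp with heq | hupp'
      · have : x = u' := peb_eq heq
        left
        rw [hPhix, this]
        exact hdomu't
      rcases ihinv x hx u' hu'Q hdomu't hupp' with hdom | hpar
      · left; rw [hPhix]; exact hdom
      by_cases hdomx : 0 < Phi pos s pb t x
      · left; rw [hPhix]; exact hdomx
      exfalso
      have hzne : pos t x + 1 ≠ pos t pb := by
        intro hc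
        have h5 : pos t x - pos t pb = -1 := by rw [← hc]; ring
        have hDxn : DD pos pb t x = n - 1 := by
          unfold DD; rw [h5, val_neg_one' hn]
        have := DD_lt (pos := pos) (pb := pb) (t := t) u'
        omega
      set z := (pos t).symm (pos t x + 1) with hz
      have hpz : pos t z = pos t x + 1 := (pos t).apply_symm_apply _
      have hzne' : z ≠ pb := by intro hc; apply hzne; rw [← hpz, hc]
      have hDz : DD pos pb t z = DD pos pb t x + 1 := by
        unfold DD
        rw [hpz]
        have h3 : pos t x + 1 - pos t pb = (pos t x - pos t pb) + 1 := by ring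
        rw [h3, val_add_one (by rw [← h3]; rw [← hpz]; exact sub_ne_zero.mpr ((pos t).injective.ne hzne'))]
      have hdomz : 0 < Phi pos s pb t z := by
        rcases Nat.eq_or_lt_of_le (by omega : DD pos pb t z ≤ DD pos pb t u') with heqz | hltz
        · have h6 : z = u' := peb_eq heqz
          rw [h6]; exact hdomu't
        · rcases ihinv z hzne' u' hu'Q hdomu't hltz with hdz | hpz2
          · exact hdz
          · exfalso
            have hflip := parity_succ he hn (pos t x)
            rw [← hpz] at hflip
            omega
      push_neg at hdomx
      rw [Phi_def] at hdomx hdomz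
      rw [hDz] at hdomz
      have hswap : s t x - s t z > 1 := by push_cast at hdomz hdomx ⊢; omega
      have hActx : Active n (pos t) (s t) t (pos t x) := by
        refine ⟨hpar, ?_⟩
        rw [Equiv.symm_apply_apply, ← hz]
        exact hswap
      exact hAx1 hActx

end Run

end Stmt19

/-- Consecutive-swaps lemma (Lemma 7).  Let `n` be even, let `Q` be a segment of
pebbles (occupying consecutive vertices at time `0`), let `p ∉ Q` be bigger
than every pebble of `Q` (`p ≻ q`, i.e. `s p − s q > d⁺(p, q)`), with the
initial disbursement minimized (`s x − s y ≤ n` for all pairs), and run the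
odd-even routing algorithm.  If round `t₀` is the first round in which `p`
swaps with a pebble of `Q`, then `p` performs a swap in every one of the
following `|Q| − 1` rounds. -/
theorem stmt19 (n : ℕ) [NeZero n] (he : Even n) (hn : 3 ≤ n)
    (P : Type*) [DecidableEq P]
    (pos : ℕ → P ≃ ZMod n) (s : ℕ → P → ℤ)
    (hrun : OddEvenRun n pos s)
    (Q : Finset P) (pb : P) (hpQ : pb ∉ Q)
    (hseg : ∃ v₀ : ZMod n, ∀ q ∈ Q, ∃ i : ℕ, i < Q.card ∧ pos 0 q = v₀ + i)
    (hbig : ∀ q ∈ Q, s 0 pb - s 0 q > dplus n (pos 0 pb) (pos 0 q))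
    (hmin : ∀ x y : P, s 0 x - s 0 y ≤ n)
    (t₀ : ℕ)
    (hswap : pos (t₀ + 1) pb = pos t₀ pb + 1 ∧ (pos t₀).symm (pos t₀ pb + 1) ∈ Q)
    (hfirst : ∀ t < t₀,
      ¬ (pos (t + 1) pb = pos t pb + 1 ∧ (pos t).symm (pos t pb + 1) ∈ Q)) :
    ∀ t : ℕ, t₀ < t → t < t₀ + Q.card → pos (t + 1) pb ≠ pos t pb := by
  classical
  intro t ht1 ht2
  set k := Q.card with hk
  have hkpos : 0 < k := Finset.card_pos.2 ⟨_, hswap.2⟩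
  have hbig' : ∀ q ∈ Q, 0 < Stmt19.Phi pos s pb 0 q := by
    intro q hq
    have h0 := hbig q hq
    have hd : dplus n (pos 0 pb) (pos 0 q) = (Stmt19.DD pos pb 0 q : ℤ) := rfl
    rw [hd] at h0
    rw [Stmt19.Phi_def]
    omega
  obtain ⟨hQ0, hI0⟩ := Stmt19.phase1 he hn hrun hpQ hseg hbig' t₀ hfirst t₀ le_rfl
  have hQbig : ∀ q ∈ Q, 0 < Stmt19.Phi pos s pb t₀ q := fun q hq => by
    rw [hQ0 q hq]; exact hbig' q hq
  have hQbound : ∀ q ∈ Q, Stmt19.Phi pos s pb t₀ q ≤ (n:ℤ) - 1 := by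
    intro q hq
    rw [hQ0 q hq, Stmt19.Phi_def]
    have h1 := hmin pb q
    have h2 : 0 < Stmt19.DD pos pb 0 q :=
      Stmt19.DD_pos (fun h => hpQ (by rw [← h]; exact hq))
    omega
  have hAt0 : Active n (pos t₀) (s t₀) t₀ (pos t₀ pb) := by
    rcases Stmt19.step_cases he hn hrun t₀ pb with ⟨hA, hppos, _⟩ | ⟨hA, hppos, _⟩ | ⟨_, _, hppos, _⟩
    · exact hA
    · exfalso
      rw [hswap.1] at hppos
      have h2 : (2 : ZMod n) = 0 := by linear_combination hppos
      have hv2 : (2 : ZMod n).val = 2 := by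
        have h3 : ((2:ℕ) : ZMod n) = (2 : ZMod n) := by push_cast; ring
        rw [← h3, ZMod.val_natCast, Nat.mod_eq_of_lt (by omega)]
      rw [h2] at hv2
      simp at hv2
    · exfalso
      rw [hswap.1] at hppos
      have h1 : (1 : ZMod n) = 0 := by linear_combination hppos
      exact Stmt19.one_ne_zero' hn h1
  have hpar0 : (pos t₀ pb).val % 2 = t₀ % 2 := hAt0.1
  have hINV0 : ∀ x : P, x ≠ pb → ∀ u ∈ Q, 0 < Stmt19.Phi pos s pb t₀ u →
      Stmt19.DD pos pb t₀ x < Stmt19.DD pos pb t₀ u →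
      (0 < Stmt19.Phi pos s pb t₀ x ∨ (pos t₀ x).val % 2 = t₀ % 2) := by
    intro x hx u hu hdomu hlt
    have hpf : pos t₀ ((pos t₀).symm (pos t₀ pb + 1)) = pos t₀ pb + 1 :=
      (pos t₀).apply_symm_apply _
    have hDf : Stmt19.DD pos pb t₀ ((pos t₀).symm (pos t₀ pb + 1)) = 1 := by
      unfold Stmt19.DD
      rw [hpf]
      have h3 : pos t₀ pb + 1 - pos t₀ pb = (1 : ZMod n) := by ring
      rw [h3, Stmt19.val_one' hn]
    have hDx : 0 < Stmt19.DD pos pb t₀ x := Stmt19.DD_pos hx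
    by_cases hx1 : Stmt19.DD pos pb t₀ x = 1
    · left
      have h4 : x = (pos t₀).symm (pos t₀ pb + 1) :=
        Stmt19.peb_eq (pos := pos) (pb := pb) (t := t₀) (by omega)
      rw [h4]
      exact hQbig _ hswap.2
    · exact hI0 x hx _ hswap.2 u hu (by omega) hlt
  have hP2 := Stmt19.phase2 he hn hrun hpQ t₀ hQbig hQbound hpar0 hINV0
  set j := t - t₀ with hj
  have hjk : j ≤ k - 1 := by omega
  obtain ⟨hpar, _, hcard, hinv⟩ := hP2 j hjk
  have hteq : t₀ + j = t := by omega
  rw [hteq] at hpar hcard hinv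
  have hEx : ∃ u ∈ Q, 0 < Stmt19.Phi pos s pb t u := by
    by_contra h
    push_neg at h
    have h5 : Q.filter (fun q => ¬ (0 < Stmt19.Phi pos s pb t q)) = Q :=
      Finset.filter_true_of_mem (fun q hq => not_lt.2 (h q hq))
    rw [h5] at hcard
    omega
  have hAt := Stmt19.adv_of_bundle he hn hrun hpQ t hpar hEx hinv
  have hadv := (hrun t pb).1 hAt
  rw [hadv.1]
  intro hc
  have h1 : (1 : ZMod n) = 0 := by linear_combination hc
  exact Stmt19.one_ne_zero' hn h1
end
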